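/- The permutation reduction relation τ on CAU⁻ terms and trails is terminating (strongly normalizing) and confluent. -/
import Mathlib



namespace CAU

/-! ## CAU⁻ syntax (de Bruijn, pure: no explicit operators) -/

/-- Trails of CAU⁻. -/
inductive NTr : Type
  | r : NTr
  | t : NTr → NTr → NTr
  | pb : NTr                      -- β
  | pbb : NTr                     -- β!
  | ti : NTr
  | lam : NTr → NTr
  | ap : NTr → NTr → NTr
  | lets : NTr → NTr → NTr
  | tb : (Fin 9 → NTr) → NTr
  deriving Inhabited

/-- Terms of CAU⁻ (de Bruijn indices). -/
inductive NTm : Type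
  | var : ℕ → NTm
  | lam : NTm → NTm
  | ap : NTm → NTm → NTm
  | lets : NTm → NTm → NTm
  | bang : NTr → NTm → NTm
  | ann : NTr → NTm → NTm         -- q ▷ M
  | insp : (Fin 9 → NTm) → NTm    -- ι(ϑ)
  deriving Inhabited

/-- Permutation (τ) reduction on CAU⁻ trails, closed under arbitrary contexts. -/
inductive TStepQ : NTr → NTr → Prop
  | tReflR (q) : TStepQ (.t q .r) q
  | tReflL (q) : TStepQ (.t .r q) q
  | tbRefl : TStepQ (.tb fun _ => .r) .r
  | apRefl : TStepQ (.ap .r .r) .r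
  | lamRefl : TStepQ (.lam .r) .r
  | letsRefl : TStepQ (.lets .r .r) .r
  | tAssoc (q₁ q₂ q₃) : TStepQ (.t (.t q₁ q₂) q₃) (.t q₁ (.t q₂ q₃))
  | tLam (q q') : TStepQ (.t (.lam q) (.lam q')) (.lam (.t q q'))
  | tLamT (q₁ q₁' q) :
      TStepQ (.t (.lam q₁) (.t (.lam q₁') q)) (.t (.lam (.t q₁ q₁')) q)
  | tAp (q₁ q₂ q₁' q₂') :
      TStepQ (.t (.ap q₁ q₂) (.ap q₁' q₂')) (.ap (.t q₁ q₁') (.t q₂ q₂'))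
  | tApT (q₁ q₂ q₁' q₂' q) :
      TStepQ (.t (.ap q₁ q₂) (.t (.ap q₁' q₂') q)) (.t (.ap (.t q₁ q₁') (.t q₂ q₂')) q)
  | tLets (q₁ q₂ q₁' q₂') :
      TStepQ (.t (.lets q₁ q₂) (.lets q₁' q₂')) (.lets (.t q₁ q₁') (.t q₂ q₂'))
  | tLetsT (q₁ q₂ q₁' q₂' q) :
      TStepQ (.t (.lets q₁ q₂) (.t (.lets q₁' q₂') q)) (.t (.lets (.t q₁ q₁') (.t q₂ q₂')) q)
  | tTb (ζ₁ ζ₂) : TStepQ (.t (.tb ζ₁) (.tb ζ₂)) (.tb fun i => .t (ζ₁ i) (ζ₂ i))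
  | tTbT (ζ₁ ζ₂ q) :
      TStepQ (.t (.tb ζ₁) (.t (.tb ζ₂) q)) (.t (.tb fun i => .t (ζ₁ i) (ζ₂ i)) q)
  | tL {q q''} (q') : TStepQ q q'' → TStepQ (.t q q') (.t q'' q')
  | tR {q' q''} (q) : TStepQ q' q'' → TStepQ (.t q q') (.t q q'')
  | lamC {q q'} : TStepQ q q' → TStepQ (.lam q) (.lam q')
  | apL {q q''} (q') : TStepQ q q'' → TStepQ (.ap q q') (.ap q'' q')
  | apR {q' q''} (q) : TStepQ q' q'' → TStepQ (.ap q q') (.ap q q'')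
  | letsL {q q''} (q') : TStepQ q q'' → TStepQ (.lets q q') (.lets q'' q')
  | letsR {q' q''} (q) : TStepQ q' q'' → TStepQ (.lets q q') (.lets q q'')
  | tbC {ζ} (i : Fin 9) {q'} : TStepQ (ζ i) q' →
      TStepQ (.tb ζ) (.tb (Function.update ζ i q'))

/-- Permutation (τ) reduction on CAU⁻ terms, closed under arbitrary contexts. -/
inductive TStepN : NTm → NTm → Prop
  | annRefl (M) : TStepN (.ann .r M) M
  | annAnn (q q' M) : TStepN (.ann q (.ann q' M)) (.ann (.t q q') M)
  | bangAnn (q q' M) : TStepN (.bang q (.ann q' M)) (.bang (.t q q') M)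
  | lamAnn (q M) : TStepN (.lam (.ann q M)) (.ann (.lam q) (.lam M))
  | apAnnL (q M N) : TStepN (.ap (.ann q M) N) (.ann (.ap q .r) (.ap M N))
  | apAnnR (q M N) : TStepN (.ap M (.ann q N)) (.ann (.ap .r q) (.ap M N))
  | letsAnnL (q M N) : TStepN (.lets (.ann q M) N) (.ann (.lets q .r) (.lets M N))
  | letsAnnR (q M N) : TStepN (.lets M (.ann q N)) (.ann (.lets .r q) (.lets M N))
  | inspAnn (ϑ : Fin 9 → NTm) (i : Fin 9) (q M) : ϑ i = .ann q M →
      TStepN (.insp ϑ)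
        (.ann (.tb (Function.update (fun _ => NTr.r) i q)) (.insp (Function.update ϑ i M)))
  | lamC {M M'} : TStepN M M' → TStepN (.lam M) (.lam M')
  | apL {M M'} (N) : TStepN M M' → TStepN (.ap M N) (.ap M' N)
  | apR {N N'} (M) : TStepN N N' → TStepN (.ap M N) (.ap M N')
  | letsL {M M'} (N) : TStepN M M' → TStepN (.lets M N) (.lets M' N)
  | letsR {N N'} (M) : TStepN N N' → TStepN (.lets M N) (.lets M N')
  | bangQ {q q'} (M) : TStepQ q q' → TStepN (.bang q M) (.bang q' M)
  | bangM {M M'} (q) : TStepN M M' → TStepN (.bang q M) (.bang q M')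
  | annQ {q q'} (M) : TStepQ q q' → TStepN (.ann q M) (.ann q' M)
  | annM {M M'} (q) : TStepN M M' → TStepN (.ann q M) (.ann q M')
  | inspC {ϑ} (i : Fin 9) {M'} : TStepN (ϑ i) M' →
      TStepN (.insp ϑ) (.insp (Function.update ϑ i M'))

end CAU

/-! ## CAU⁻σ syntax: explicit substitutions and explicit trail projections -/

namespace CAU

mutual
  /-- Terms of CAU⁻σ. -/
  inductive Tm : Type
    | one : Tm                               -- de Bruijn index 1
    | lam : Tm → Tm
    | ap : Tm → Tm → Tm
    | lets : Tm → Tm → Tm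
    | bang : Tr → Tm → Tm
    | ann : Tr → Tm → Tm                     -- q ▷ M
    | insp : (Fin 9 → Tm) → Tm               -- ι(ϑ)
    | sub : Tm → Sb → Tm                     -- closure M[s]
    | er : Tm → Tm                           -- explicit trail erasure ⌊M⌋
  /-- Trails of CAU⁻σ. -/
  inductive Tr : Type
    | r : Tr
    | t : Tr → Tr → Tr
    | pb : Tr                                -- β
    | pbb : Tr                               -- β!
    | ti : Tr
    | lam : Tr → Tr
    | ap : Tr → Tr → Tr
    | lets : Tr → Tr → Tr
    | tb : (Fin 9 → Tr) → Tr
    | ext : Tm → Tr                          -- explicit trail extraction ⌈M⌉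
  /-- Explicit substitutions of CAU⁻σ. -/
  inductive Sb : Type
    | id : Sb                                -- ⟨⟩
    | sh : Sb                                -- ↑
    | cons : Tm → Sb → Sb                    -- M · s
    | comp : Sb → Sb → Sb                    -- s ∘ t
end

instance : Inhabited Tm := ⟨Tm.one⟩
instance : Inhabited Tr := ⟨Tr.r⟩
instance : Inhabited Sb := ⟨Sb.id⟩

/-- `pow n` is the iterated lift `↑^(n+1)`. -/
def pow : ℕ → Sb
  | 0 => .sh
  | n + 1 => .comp .sh (pow n)

mutual
  /-- σ∪τ one-step reduction on CAU⁻σ terms (closed under arbitrary contexts). -/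
  inductive StepT : Tm → Tm → Prop
    -- σ-rules for explicit substitutions
    | subOneId : StepT (.sub .one .id) .one
    | subOneCons (M s) : StepT (.sub .one (.cons M s)) M
    | subLam (M s) : StepT (.sub (.lam M) s) (.lam (.sub M (.cons .one (.comp s .sh))))
    | subAp (M N s) : StepT (.sub (.ap M N) s) (.ap (.sub M s) (.sub N s))
    | subBang (q M s) : StepT (.sub (.bang q M) s) (.bang q (.sub M s))
    | subLets (M N s) :
        StepT (.sub (.lets M N) s) (.lets (.sub M s) (.sub N (.cons .one (.comp s .sh))))
    | subAnn (q M s) : StepT (.sub (.ann q M) s) (.ann q (.sub M s))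
    | subInsp (ϑ s) : StepT (.sub (.insp ϑ) s) (.insp fun i => .sub (ϑ i) s)
    | subSub (M s t) : StepT (.sub (.sub M s) t) (.sub M (.comp s t))
    -- σ-rules for explicit trail erasure
    | erOne : StepT (.er .one) .one
    | erOneSh (n) : StepT (.er (.sub .one (pow n))) (.sub .one (pow n))
    | erLam (M) : StepT (.er (.lam M)) (.lam (.er M))
    | erAp (M N) : StepT (.er (.ap M N)) (.ap (.er M) (.er N))
    | erBang (q M) : StepT (.er (.bang q M)) (.bang q M)
    | erLets (M N) : StepT (.er (.lets M N)) (.lets (.er M) (.er N))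
    | erAnn (q M) : StepT (.er (.ann q M)) (.er M)
    | erInsp (ϑ) : StepT (.er (.insp ϑ)) (.insp fun i => .er (ϑ i))
    -- τ-rules on terms
    | annRefl (M) : StepT (.ann .r M) M
    | annAnn (q q' M) : StepT (.ann q (.ann q' M)) (.ann (.t q q') M)
    | bangAnn (q q' M) : StepT (.bang q (.ann q' M)) (.bang (.t q q') M)
    | lamAnn (q M) : StepT (.lam (.ann q M)) (.ann (.lam q) (.lam M))
    | apAnnL (q M N) : StepT (.ap (.ann q M) N) (.ann (.ap q .r) (.ap M N))
    | apAnnR (q M N) : StepT (.ap M (.ann q N)) (.ann (.ap .r q) (.ap M N))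
    | letsAnnL (q M N) : StepT (.lets (.ann q M) N) (.ann (.lets q .r) (.lets M N))
    | letsAnnR (q M N) : StepT (.lets M (.ann q N)) (.ann (.lets .r q) (.lets M N))
    | inspAnn (ϑ : Fin 9 → Tm) (i : Fin 9) (q M) : ϑ i = .ann q M →
        StepT (.insp ϑ)
          (.ann (.tb (Function.update (fun _ => Tr.r) i q)) (.insp (Function.update ϑ i M)))
    -- congruence closure
    | lamC {M M'} : StepT M M' → StepT (.lam M) (.lam M')
    | apL {M M'} (N) : StepT M M' → StepT (.ap M N) (.ap M' N)
    | apR {N N'} (M) : StepT N N' → StepT (.ap M N) (.ap M N')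
    | letsL {M M'} (N) : StepT M M' → StepT (.lets M N) (.lets M' N)
    | letsR {N N'} (M) : StepT N N' → StepT (.lets M N) (.lets M N')
    | bangQ {q q'} (M) : StepQ q q' → StepT (.bang q M) (.bang q' M)
    | bangM {M M'} (q) : StepT M M' → StepT (.bang q M) (.bang q M')
    | annQ {q q'} (M) : StepQ q q' → StepT (.ann q M) (.ann q' M)
    | annM {M M'} (q) : StepT M M' → StepT (.ann q M) (.ann q M')
    | inspC {ϑ} (i : Fin 9) {M'} : StepT (ϑ i) M' →
        StepT (.insp ϑ) (.insp (Function.update ϑ i M'))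
    | subM {M M'} (s) : StepT M M' → StepT (.sub M s) (.sub M' s)
    | subS {s s'} (M) : StepS s s' → StepT (.sub M s) (.sub M s')
    | erC {M M'} : StepT M M' → StepT (.er M) (.er M')
  /-- σ∪τ one-step reduction on CAU⁻σ trails. -/
  inductive StepQ : Tr → Tr → Prop
    -- σ-rules for explicit trail extraction
    | extOne : StepQ (.ext .one) .r
    | extOneSh (n) : StepQ (.ext (.sub .one (pow n))) .r
    | extLam (M) : StepQ (.ext (.lam M)) (.lam (.ext M))
    | extAp (M N) : StepQ (.ext (.ap M N)) (.ap (.ext M) (.ext N))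
    | extBang (q M) : StepQ (.ext (.bang q M)) .r
    | extLets (M N) : StepQ (.ext (.lets M N)) (.lets (.ext M) (.ext N))
    | extAnn (q M) : StepQ (.ext (.ann q M)) (.t q (.ext M))
    | extInsp (ϑ) : StepQ (.ext (.insp ϑ)) (.tb fun i => .ext (ϑ i))
    -- τ-rules on trails
    | tReflR (q) : StepQ (.t q .r) q
    | tReflL (q) : StepQ (.t .r q) q
    | tbRefl : StepQ (.tb fun _ => .r) .r
    | apRefl : StepQ (.ap .r .r) .r
    | lamRefl : StepQ (.lam .r) .r
    | letsRefl : StepQ (.lets .r .r) .r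
    | tAssoc (q₁ q₂ q₃) : StepQ (.t (.t q₁ q₂) q₃) (.t q₁ (.t q₂ q₃))
    | tLam (q q') : StepQ (.t (.lam q) (.lam q')) (.lam (.t q q'))
    | tLamT (q₁ q₁' q) :
        StepQ (.t (.lam q₁) (.t (.lam q₁') q)) (.t (.lam (.t q₁ q₁')) q)
    | tAp (q₁ q₂ q₁' q₂') :
        StepQ (.t (.ap q₁ q₂) (.ap q₁' q₂')) (.ap (.t q₁ q₁') (.t q₂ q₂'))
    | tApT (q₁ q₂ q₁' q₂' q) :
        StepQ (.t (.ap q₁ q₂) (.t (.ap q₁' q₂') q)) (.t (.ap (.t q₁ q₁') (.t q₂ q₂')) q)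
    | tLets (q₁ q₂ q₁' q₂') :
        StepQ (.t (.lets q₁ q₂) (.lets q₁' q₂')) (.lets (.t q₁ q₁') (.t q₂ q₂'))
    | tLetsT (q₁ q₂ q₁' q₂' q) :
        StepQ (.t (.lets q₁ q₂) (.t (.lets q₁' q₂') q)) (.t (.lets (.t q₁ q₁') (.t q₂ q₂')) q)
    | tTb (ζ₁ ζ₂) : StepQ (.t (.tb ζ₁) (.tb ζ₂)) (.tb fun i => .t (ζ₁ i) (ζ₂ i))
    | tTbT (ζ₁ ζ₂ q) :
        StepQ (.t (.tb ζ₁) (.t (.tb ζ₂) q)) (.t (.tb fun i => .t (ζ₁ i) (ζ₂ i)) q)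
    -- congruence closure
    | tL {q q''} (q') : StepQ q q'' → StepQ (.t q q') (.t q'' q')
    | tR {q' q''} (q) : StepQ q' q'' → StepQ (.t q q') (.t q q'')
    | lamC {q q'} : StepQ q q' → StepQ (.lam q) (.lam q')
    | apL {q q''} (q') : StepQ q q'' → StepQ (.ap q q') (.ap q'' q')
    | apR {q' q''} (q) : StepQ q' q'' → StepQ (.ap q q') (.ap q q'')
    | letsL {q q''} (q') : StepQ q q'' → StepQ (.lets q q') (.lets q'' q')
    | letsR {q' q''} (q) : StepQ q' q'' → StepQ (.lets q q') (.lets q q'')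
    | tbC {ζ} (i : Fin 9) {q'} : StepQ (ζ i) q' → StepQ (.tb ζ) (.tb (Function.update ζ i q'))
    | extC {M M'} : StepT M M' → StepQ (.ext M) (.ext M')
  /-- σ one-step reduction on CAU⁻σ substitutions. -/
  inductive StepS : Sb → Sb → Prop
    | idComp (s) : StepS (.comp .id s) s
    | shId : StepS (.comp .sh .id) .sh
    | shCons (M s) : StepS (.comp .sh (.cons M s)) s
    | consComp (M s t) : StepS (.comp (.cons M s) t) (.cons (.sub M t) (.comp s t))
    | compAssoc (s₁ s₂ s₃) : StepS (.comp (.comp s₁ s₂) s₃) (.comp s₁ (.comp s₂ s₃))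
    | consM {M M'} (s) : StepT M M' → StepS (.cons M s) (.cons M' s)
    | consS {s s'} (M) : StepS s s' → StepS (.cons M s) (.cons M s')
    | compL {s s''} (t) : StepS s s'' → StepS (.comp s t) (.comp s'' t)
    | compR {t t'} (s) : StepS t t' → StepS (.comp s t) (.comp s t')
end

/-- στ-normal terms. -/
def NormalT (M : Tm) : Prop := ∀ N, ¬ StepT M N
/-- στ-normal trails. -/
def NormalQ (q : Tr) : Prop := ∀ q', ¬ StepQ q q'
/-- σ-normal substitutions. -/
def NormalS (s : Sb) : Prop := ∀ t, ¬ StepS s t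

/-- `nf` is a στ-normal-form function for terms. -/
def IsNFT (nf : Tm → Tm) : Prop :=
  ∀ M, Relation.ReflTransGen StepT M (nf M) ∧ NormalT (nf M)
/-- `nfq` is a στ-normal-form function for trails. -/
def IsNFQ (nfq : Tr → Tr) : Prop :=
  ∀ q, Relation.ReflTransGen StepQ q (nfq q) ∧ NormalQ (nfq q)
/-- `nfs` is a σ-normal-form function for substitutions. -/
def IsNFS (nfs : Sb → Sb) : Prop :=
  ∀ s, Relation.ReflTransGen StepS s (nfs s) ∧ NormalS (nfs s)

end CAU
namespace CAU

/-! ## Grammar of στ-normal forms -/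

mutual
  /-- Grammar of στ-normal CAU⁻σ terms. -/
  inductive GTm : Tm → Prop
    | one : GTm .one
    | oneSh (n) : GTm (.sub .one (pow n))
    | lam {M} : GTm M → GTm (.lam M)
    | ap {M N} : GTm M → GTm N → GTm (.ap M N)
    | lets {M N} : GTm M → GTm N → GTm (.lets M N)
    | bang {q M} : GTr q → GTm M → GTm (.bang q M)
    | ann {q M} : GTr q → GTm M → GTm (.ann q M)
    | insp {ϑ} : (∀ i, GTm (ϑ i)) → GTm (.insp ϑ)
  /-- Grammar of στ-normal CAU⁻σ trails. -/
  inductive GTr : Tr → Prop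
    | r : GTr .r
    | t {q q'} : GTr q → GTr q' → GTr (.t q q')
    | pb : GTr .pb
    | pbb : GTr .pbb
    | ti : GTr .ti
    | lam {q} : GTr q → GTr (.lam q)
    | ap {q q'} : GTr q → GTr q' → GTr (.ap q q')
    | lets {q q'} : GTr q → GTr q' → GTr (.lets q q')
    | tb {ζ} : (∀ i, GTr (ζ i)) → GTr (.tb ζ)
end

/-- Grammar of σ-normal CAU⁻σ substitutions. -/
inductive GSb : Sb → Prop
  | id : GSb .id
  | shn (n) : GSb (pow n)
  | cons {M s} : GTm M → GSb s → GSb (.cons M s)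

/-! ## Focused forms and meta-level projections -/

/-- Meta-level trail erasure ⌊M⌋*, relative to a normal form function. -/
def metaErase (nf : Tm → Tm) (M : Tm) : Tm :=
  match nf M with
  | .ann _ M' => M'
  | N => N

/-- Meta-level trail extraction ⌈M⌉*, relative to a normal form function. -/
def metaExt (nf : Tm → Tm) (M : Tm) : Tr :=
  match nf M with
  | .ann q _ => q
  | _ => .r

/-- The focused form ⟨M⟩ = ⌈M⌉* ▷ ⌊M⌋*. -/
def focusT (nf : Tm → Tm) (M : Tm) : Tm := .ann (metaExt nf M) (metaErase nf M)

/-- Focusing a σ-normal substitution pointwise. -/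
def focusSb (nf : Tm → Tm) : Sb → Sb
  | .cons M s => .cons (focusT nf M) (focusSb nf s)
  | s => s

end CAU
namespace CAU

/-! ## Embedding pure (σ-normal) terms into CAU⁻σ -/

/-- Embedding of pure trails. -/
def toTr : NTr → Tr
  | .r => .r
  | .t q q' => .t (toTr q) (toTr q')
  | .pb => .pb
  | .pbb => .pbb
  | .ti => .ti
  | .lam q => .lam (toTr q)
  | .ap q q' => .ap (toTr q) (toTr q')
  | .lets q q' => .lets (toTr q) (toTr q')
  | .tb ζ => .tb fun i => toTr (ζ i)

/-- Embedding of pure terms: de Bruijn index `var n` (0-based) becomes `1[↑ⁿ]`. -/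
def toTm : NTm → Tm
  | .var 0 => .one
  | .var (n+1) => .sub .one (pow n)
  | .lam M => .lam (toTm M)
  | .ap M N => .ap (toTm M) (toTm N)
  | .lets M N => .lets (toTm M) (toTm N)
  | .bang q M => .bang (toTr q) (toTm M)
  | .ann q M => .ann (toTr q) (toTm M)
  | .insp ϑ => .insp fun i => toTm (ϑ i)

/-- `shiftP p` is the substitution `↑ᵖ` (with `↑⁰ = ⟨⟩`). -/
def shiftP : ℕ → Sb
  | 0 => .id
  | n + 1 => pow n

/-- The substitution `N₁ · … · N_k · ↑ᵖ`. -/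
def mkSub : List Tm → ℕ → Sb
  | [], p => shiftP p
  | M :: l, p => .cons M (mkSub l p)

/-! ## Meta-level substitution on pure terms -/

/-- Lift by one all free indices ≥ d. -/
def liftN (d : ℕ) : NTm → NTm
  | .var n => if n < d then .var n else .var (n + 1)
  | .lam M => .lam (liftN (d+1) M)
  | .ap M N => .ap (liftN d M) (liftN d N)
  | .lets M N => .lets (liftN d M) (liftN d (N))
  | .bang q M => .bang q (liftN d M)
  | .ann q M => .ann q (liftN d M)
  | .insp ϑ => .insp fun i => liftN d (ϑ i)

/-- Meta-level simultaneous substitution `M{N⃗}ₚ` on pure terms. -/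
def msubst : NTm → ℕ → List NTm → NTm
  | .var n, p, l => if h : n < l.length then l.get ⟨n, h⟩ else .var (n - l.length + p)
  | .lam M, p, l => .lam (msubst M (p+1) (.var 0 :: l.map (liftN 0)))
  | .ap M N, p, l => .ap (msubst M p l) (msubst N p l)
  | .lets M N, p, l => .lets (msubst M p l) (msubst N (p+1) (.var 0 :: l.map (liftN 0)))
  | .bang q M, p, l => .bang q (msubst M p l)
  | .ann q M, p, l => .ann q (msubst M p l)
  | .insp ϑ, p, l => .insp fun i => msubst (ϑ i) p l

/-! ## Trail inspection: structural recursion qϑ over trails -/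

/-- Structural recursion `qϑ` over a pure trail, applying the nine inspection branches. -/
def recTrailN : NTr → (Fin 9 → NTm) → NTm
  | .r, ϑ => ϑ 0
  | .t q q', ϑ => .ap (.ap (ϑ 1) (recTrailN q ϑ)) (recTrailN q' ϑ)
  | .pb, ϑ => ϑ 2
  | .pbb, ϑ => ϑ 3
  | .ti, ϑ => ϑ 4
  | .lam q, ϑ => .ap (ϑ 5) (recTrailN q ϑ)
  | .ap q q', ϑ => .ap (.ap (ϑ 6) (recTrailN q ϑ)) (recTrailN q' ϑ)
  | .lets q q', ϑ => .ap (.ap (ϑ 7) (recTrailN q ϑ)) (recTrailN q' ϑ)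
  | .tb ζ, ϑ => (List.ofFn fun i => recTrailN (ζ i) ϑ).foldl .ap (ϑ 8)

/-- Structural recursion `qϑ` over a CAU⁻σ trail (junk value on explicit extractions,
which cannot occur in the στ-normal trails it is applied to). -/
def recTrailT : Tr → (Fin 9 → Tm) → Tm
  | .r, ϑ => ϑ 0
  | .t q q', ϑ => .ap (.ap (ϑ 1) (recTrailT q ϑ)) (recTrailT q' ϑ)
  | .pb, ϑ => ϑ 2
  | .pbb, ϑ => ϑ 3
  | .ti, ϑ => ϑ 4
  | .lam q, ϑ => .ap (ϑ 5) (recTrailT q ϑ)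
  | .ap q q', ϑ => .ap (.ap (ϑ 6) (recTrailT q ϑ)) (recTrailT q' ϑ)
  | .lets q q', ϑ => .ap (.ap (ϑ 7) (recTrailT q ϑ)) (recTrailT q' ϑ)
  | .tb ζ, ϑ => (List.ofFn fun i => recTrailT (ζ i) ϑ).foldl .ap (ϑ 8)
  | .ext _, ϑ => ϑ 0

/-! ## Meta-level β-reduction on pure (σ-normal) terms -/

/-- One inspection step in a bang-free context of a pure term:
some `ι(ϑ)` not guarded by a bang is replaced by `ti ▷ qϑ`. -/
inductive FInspN (q : NTr) : NTm → NTm → Prop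
  | insp (ϑ) : FInspN q (.insp ϑ) (.ann .ti (recTrailN q ϑ))
  | lam {M M'} : FInspN q M M' → FInspN q (.lam M) (.lam M')
  | apL {M M'} (N) : FInspN q M M' → FInspN q (.ap M N) (.ap M' N)
  | apR {N N'} (M) : FInspN q N N' → FInspN q (.ap M N) (.ap M N')
  | letsL {M M'} (N) : FInspN q M M' → FInspN q (.lets M N) (.lets M' N)
  | letsR {N N'} (M) : FInspN q N N' → FInspN q (.lets M N) (.lets M N')
  | ann {M M'} (q') : FInspN q M M' → FInspN q (.ann q' M) (.ann q' M')
  | inspC {ϑ} (i : Fin 9) {M'} : FInspN q (ϑ i) M' →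
      FInspN q (.insp ϑ) (.insp (Function.update ϑ i M'))

/-- Meta-level β-reduction on pure (σ-normal) terms, closed under σ-normal contexts. -/
inductive BetaN : NTm → NTm → Prop
  | beta (M N) : BetaN (.ap (.lam M) N) (.ann .pb (msubst M 0 [N]))
  | betaBang (q M N) : BetaN (.lets (.bang q M) N) (.ann .pbb (msubst N 0 [.ann q M]))
  | insp {q M M'} : FInspN q M M' → BetaN (.bang q M) (.bang q M')
  | lam {M M'} : BetaN M M' → BetaN (.lam M) (.lam M')
  | apL {M M'} (N) : BetaN M M' → BetaN (.ap M N) (.ap M' N)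
  | apR {N N'} (M) : BetaN N N' → BetaN (.ap M N) (.ap M N')
  | letsL {M M'} (N) : BetaN M M' → BetaN (.lets M N) (.lets M' N)
  | letsR {N N'} (M) : BetaN N N' → BetaN (.lets M N) (.lets M N')
  | bang {M M'} (q) : BetaN M M' → BetaN (.bang q M) (.bang q M')
  | ann {M M'} (q) : BetaN M M' → BetaN (.ann q M) (.ann q M')
  | inspC {ϑ} (i : Fin 9) {M'} : BetaN (ϑ i) M' →
      BetaN (.insp ϑ) (.insp (Function.update ϑ i M'))

/-! ## Lazy Beta-reduction of CAU⁻σ -/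

/-- One inspection step in a context whose hole is not inside a bang, a substitution,
or an erasure: some `ι(ϑ)` is replaced by `ti ▷ qϑ`. -/
inductive FInspT (q : Tr) : Tm → Tm → Prop
  | insp (ϑ) : FInspT q (.insp ϑ) (.ann .ti (recTrailT q ϑ))
  | lam {M M'} : FInspT q M M' → FInspT q (.lam M) (.lam M')
  | apL {M M'} (N) : FInspT q M M' → FInspT q (.ap M N) (.ap M' N)
  | apR {N N'} (M) : FInspT q N N' → FInspT q (.ap M N) (.ap M N')
  | letsL {M M'} (N) : FInspT q M M' → FInspT q (.lets M N) (.lets M' N)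
  | letsR {N N'} (M) : FInspT q N N' → FInspT q (.lets M N) (.lets M N')
  | ann {M M'} (q') : FInspT q M M' → FInspT q (.ann q' M) (.ann q' M')
  | inspC {ϑ} (i : Fin 9) {M'} : FInspT q (ϑ i) M' →
      FInspT q (.insp ϑ) (.insp (Function.update ϑ i M'))

mutual
  /-- The lazy Beta-relation of CAU⁻σ (relative to a normal form function `nfq`
  for trails, used in the trail inspection rule), closed under evaluation contexts
  `E_σ` whose hole does not occur inside an erasure. -/
  inductive LBeta (nfq : Tr → Tr) : Tm → Tm → Prop
    | beta (M N) :
        LBeta nfq (.ap (.lam M) N)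
          (.ann (.t (.ap (.lam (.ext M)) (.ext N)) .pb) (.sub (.er M) (.cons (.er N) .id)))
    | betaBang (q M N) :
        LBeta nfq (.lets (.bang q M) N)
          (.ann (.t (.lets .r (.ext N)) .pbb) (.sub (.er N) (.cons (.ann q M) .id)))
    | insp {q M M'} : FInspT (nfq (.t q (.ext M))) M M' →
        LBeta nfq (.bang q M) (.bang q M')
    | lam {M M'} : LBeta nfq M M' → LBeta nfq (.lam M) (.lam M')
    | apL {M M'} (N) : LBeta nfq M M' → LBeta nfq (.ap M N) (.ap M' N)
    | apR {N N'} (M) : LBeta nfq N N' → LBeta nfq (.ap M N) (.ap M N')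
    | letsL {M M'} (N) : LBeta nfq M M' → LBeta nfq (.lets M N) (.lets M' N)
    | letsR {N N'} (M) : LBeta nfq N N' → LBeta nfq (.lets M N) (.lets M N')
    | bang {M M'} (q) : LBeta nfq M M' → LBeta nfq (.bang q M) (.bang q M')
    | ann {M M'} (q) : LBeta nfq M M' → LBeta nfq (.ann q M) (.ann q M')
    | inspC {ϑ} (i : Fin 9) {M'} : LBeta nfq (ϑ i) M' →
        LBeta nfq (.insp ϑ) (.insp (Function.update ϑ i M'))
    | subM {M M'} (s) : LBeta nfq M M' → LBeta nfq (.sub M s) (.sub M' s)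
    | subS {s s'} (M) : LBetaSub nfq s s' → LBeta nfq (.sub M s) (.sub M s')
  /-- Lazy Beta-reduction inside substitutions. -/
  inductive LBetaSub (nfq : Tr → Tr) : Sb → Sb → Prop
    | consM {M M'} (s) : LBeta nfq M M' → LBetaSub nfq (.cons M s) (.cons M' s)
    | consS {s s'} (M) : LBetaSub nfq s s' → LBetaSub nfq (.cons M s) (.cons M s')
    | compL {s s''} (t) : LBetaSub nfq s s'' → LBetaSub nfq (.comp s t) (.comp s'' t)
    | compR {t t'} (s) : LBetaSub nfq t t' → LBetaSub nfq (.comp s t) (.comp s t')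
end

/-- CAU⁻σ reduction: the union of Beta-reduction and στ-equivalence. -/
def SRed (nfq : Tr → Tr) (M N : Tm) : Prop :=
  LBeta nfq M N ∨ Relation.EqvGen StepT M N

/-! ## Naive (eager) CAU⁻ reduction on στ-normal terms -/

/-- A principal contraction in the style of CAU⁻ (using an explicit substitution for
the redex, to be normalized away immediately afterwards), closed under arbitrary
CAU⁻ contexts. -/
inductive NaiveBeta : Tm → Tm → Prop
  | beta (M N) : NaiveBeta (.ap (.lam M) N) (.ann .pb (.sub M (.cons N .id)))
  | betaBang (q M N) :
      NaiveBeta (.lets (.bang q M) N) (.ann .pbb (.sub N (.cons (.ann q M) .id)))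
  | insp {q M M'} : FInspT q M M' → NaiveBeta (.bang q M) (.bang q M')
  | lam {M M'} : NaiveBeta M M' → NaiveBeta (.lam M) (.lam M')
  | apL {M M'} (N) : NaiveBeta M M' → NaiveBeta (.ap M N) (.ap M' N)
  | apR {N N'} (M) : NaiveBeta N N' → NaiveBeta (.ap M N) (.ap M N')
  | letsL {M M'} (N) : NaiveBeta M M' → NaiveBeta (.lets M N) (.lets M' N)
  | letsR {N N'} (M) : NaiveBeta N N' → NaiveBeta (.lets M N) (.lets M N')
  | bang {M M'} (q) : NaiveBeta M M' → NaiveBeta (.bang q M) (.bang q M')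
  | ann {M M'} (q) : NaiveBeta M M' → NaiveBeta (.ann q M) (.ann q M')
  | inspC {ϑ} (i : Fin 9) {M'} : NaiveBeta (ϑ i) M' →
      NaiveBeta (.insp ϑ) (.insp (Function.update ϑ i M'))

/-- One step of CAU⁻ reduction: a principal contraction followed by normalization. -/
def CRed (nf : Tm → Tm) (M N : Tm) : Prop := ∃ R, NaiveBeta M R ∧ N = nf R

/-! ## The eager β̄-reduction on focused forms -/

/-- β̄-reduction: the relation on focused forms induced by meta-level β on pure terms. -/
def BbarT (nf : Tm → Tm) (A B : Tm) : Prop :=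
  ∃ M N : NTm, BetaN M N ∧ A = focusT nf (toTm M) ∧ B = focusT nf (toTm N)

/-- Focusing of a σ-normal substitution `N⃗ · ↑ᵖ` given by a list of pure terms. -/
def focusNSub (nf : Tm → Tm) (l : List NTm) (p : ℕ) : Sb :=
  mkSub (l.map fun M => focusT nf (toTm M)) p

/-- β̄-reduction on focused substitutions: one component β-reduces. -/
def BbarS (nf : Tm → Tm) (A B : Sb) : Prop :=
  ∃ (l : List NTm) (p : ℕ) (i : ℕ) (h : i < l.length) (N' : NTm),
    BetaN (l.get ⟨i, h⟩) N' ∧ A = focusNSub nf l p ∧ B = focusNSub nf (l.set i N') p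

/-- One-hole σ-normal contexts over pure terms. -/
inductive NCtx : Type
  | hole : NCtx
  | lam : NCtx → NCtx
  | apL : NCtx → NTm → NCtx
  | apR : NTm → NCtx → NCtx
  | letsL : NCtx → NTm → NCtx
  | letsR : NTm → NCtx → NCtx
  | bang : NTr → NCtx → NCtx
  | ann : NTr → NCtx → NCtx
  | insp : (Fin 9 → NTm) → Fin 9 → NCtx → NCtx

/-- Filling the hole of a σ-normal context. -/
def fillN : NCtx → NTm → NTm
  | .hole, X => X
  | .lam C, X => .lam (fillN C X)
  | .apL C N, X => .ap (fillN C X) N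
  | .apR M C, X => .ap M (fillN C X)
  | .letsL C N, X => .lets (fillN C X) N
  | .letsR M C, X => .lets M (fillN C X)
  | .bang q C, X => .bang q (fillN C X)
  | .ann q C, X => .ann q (fillN C X)
  | .insp ϑ i C, X => .insp (Function.update ϑ i (fillN C X))

end CAU
namespace CAU

/-! ## The call-by-value abstract machine -/

mutual
  /-- Machine closures. -/
  inductive Clo : Type
    | lamC : NTm → Env → Clo          -- ⌊(λM̂)[e]⌋
    | bangC : Tr → Clo → Clo          -- !_q C
  /-- Machine values `q ▷ C`. -/
  inductive Val : Type
    | mk : Tr → Clo → Val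
  /-- Machine environments: lists of values. -/
  inductive Env : Type
    | nil : Env
    | cons : Val → Env → Env
end

instance : Inhabited Clo := ⟨.lamC (.var 0) .nil⟩
instance : Inhabited Val := ⟨.mk .r default⟩
instance : Inhabited Env := ⟨.nil⟩

/-- The trail of a value. -/
def Val.tr : Val → Tr | .mk q _ => q
/-- The closure of a value. -/
def Val.clo : Val → Clo | .mk _ C => C

/-- Length of an environment. -/
def envLen : Env → ℕ
  | .nil => 0
  | .cons _ e => envLen e + 1

/-- Environment lookup `e(n)`, returning the n-th closure (0-based). -/
def lookupE : Env → ℕ → Option Clo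
  | .cons (.mk _ C) _, 0 => some C
  | .cons _ e, n + 1 => lookupE e n
  | .nil, _ => none

mutual
  /-- The CAU⁻σ term denoted by a closure. -/
  def cloToTm : Clo → Tm
    | .lamC M e => .er (.sub (.lam (toTm M)) (envToSub e))
    | .bangC q C => .bang q (cloToTm C)
  /-- The CAU⁻σ term denoted by a value. -/
  def valToTm : Val → Tm
    | .mk q C => .ann q (cloToTm C)
  /-- The explicit substitution denoted by an environment. -/
  def envToSub : Env → Sb
    | .nil => .id
    | .cons V e => .cons (valToTm V) (envToSub e)
end

/-- Pure terms closed below depth `d` (all free indices < d). -/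
def closedN (d : ℕ) : NTm → Prop
  | .var n => n < d
  | .lam M => closedN (d+1) M
  | .ap M N => closedN d M ∧ closedN d N
  | .lets M N => closedN d M ∧ closedN (d+1) N
  | .bang _ M => closedN d M
  | .ann _ M => closedN d M
  | .insp ϑ => ∀ i, closedN d (ϑ i)

mutual
  /-- Closed closures. -/
  def closedClo : Clo → Prop
    | .lamC M e => closedN (envLen e + 1) M ∧ closedEnv e
    | .bangC _ C => closedClo C
  /-- Closed values. -/
  def closedVal : Val → Prop
    | .mk _ C => closedClo C
  /-- Closed environments. -/
  def closedEnv : Env → Prop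
    | .nil => True
    | .cons V e => closedVal V ∧ closedEnv e
end

/-- Machine codes: pure terms or fragments of abstract syntax tree. -/
inductive Code : Type
  | tm : NTm → Code
  | ap : Code
  | bg : Code
  | lt : NTm → Code
  | ins : Code

/-- Stack tuples `(q | κ | e)`. -/
structure Tup where
  q : Tr
  κ : Code
  e : Env

instance : Inhabited Tup := ⟨⟨.r, .ap, .nil⟩⟩

/-- Stacks. -/
abbrev Stack := List Tup
/-- Dumps. -/
abbrev Dump := List Val
/-- Machine configurations. -/
abbrev Config := Stack × Dump

/-- The tuple for a pending inspection branch. -/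
def brTup (x : Tr × NTm × Env) : Tup := ⟨x.1, .tm x.2.1, x.2.2⟩

mutual
  /-- Well-formed context configurations. -/
  inductive WfCtx : Stack → Dump → Prop
    | nil : WfCtx [] []
    | apTm {π D} (q q' M e) : WfCtx π D →
        WfCtx (⟨q, .tm M, e⟩ :: ⟨q', .ap, .nil⟩ :: π) D
    | apVal {π D} (q V) : WfCtx π D → WfCtx (⟨q, .ap, .nil⟩ :: π) (V :: D)
    | lt {π D} (q M e) : WfCtx π D → WfCtx (⟨q, .lt M, e⟩ :: π) D
    | bg {π D} (q) : WfCtx π D → WfCtx (⟨q, .bg, .nil⟩ :: π) D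
    | ins {π D} (q') (ts : List (Tr × NTm × Env)) (vs : List Val) :
        vs.length + ts.length = 8 → WfCtx π D →
        WfCtx (ts.map brTup ++ ⟨q', .ins, .nil⟩ :: π) (vs ++ D)
  /-- Well-formed term configurations. -/
  inductive WfTm : Stack → Dump → Prop
    | fin (V) : WfTm [] [V]
    | tm {π D} (q M e) : WfCtx π D → WfTm (⟨q, .tm M, e⟩ :: π) D
    | ap {π D} (q V W) : WfCtx π D → WfTm (⟨q, .ap, .nil⟩ :: π) (W :: V :: D)
    | lt {π D} (q M e V) : WfCtx π D → WfTm (⟨q, .lt M, e⟩ :: π) (V :: D)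
    | bg {π D} (q V) : WfCtx π D → WfTm (⟨q, .bg, .nil⟩ :: π) (V :: D)
    | ins {π D} (q) (vs : List Val) : vs.length = 9 → WfCtx π D →
        WfTm (⟨q, .ins, .nil⟩ :: π) (vs ++ D)
end

/-- The term denoted by a pending-branch tuple. -/
def tupDen (x : Tr × NTm × Env) : Tm := .ann x.1 (.er (.sub (toTm x.2.1) (envToSub x.2.2)))

mutual
  /-- Denotation of context configurations as CAU⁻σ one-hole contexts. -/
  inductive CtxDen : Stack → Dump → (Tm → Tm) → Prop
    | nil : CtxDen [] [] id
    | apTm {π D E} (q q' M e) : CtxDen π D E →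
        CtxDen (⟨q, .tm M, e⟩ :: ⟨q', .ap, .nil⟩ :: π) D
          (fun X => E (.ann q' (.ap X (.ann q (.er (.sub (toTm M) (envToSub e)))))))
    | apVal {π D E} (q V) : CtxDen π D E →
        CtxDen (⟨q, .ap, .nil⟩ :: π) (V :: D) (fun X => E (.ann q (.ap (valToTm V) X)))
    | lt {π D E} (q N e) : CtxDen π D E →
        CtxDen (⟨q, .lt N, e⟩ :: π) D
          (fun X => E (.ann q (.lets X
            (.er (.sub (toTm N) (.cons .one (.comp (envToSub e) .sh)))))))
    | bg {π D E} (q) : CtxDen π D E →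
        CtxDen (⟨q, .bg, .nil⟩ :: π) D (fun X => E (.ann q (.bang .r X)))
    | ins {π D E} (q') (ts : List (Tr × NTm × Env)) (vs : List Val) :
        vs.length + ts.length = 8 → CtxDen π D E →
        CtxDen (ts.map brTup ++ ⟨q', .ins, .nil⟩ :: π) (vs ++ D)
          (fun X => E (.ann q' (.insp fun i =>
            if h : (i : ℕ) < vs.length then valToTm (vs.get ⟨i, h⟩)
            else if (i : ℕ) = vs.length then X
            else tupDen (ts.getD ((i : ℕ) - vs.length - 1) default))))
  /-- Denotation of term configurations as CAU⁻σ terms. -/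
  inductive TmDen : Stack → Dump → Tm → Prop
    | fin (V) : TmDen [] [V] (valToTm V)
    | tm {π D E} (q M e) : CtxDen π D E →
        TmDen (⟨q, .tm M, e⟩ :: π) D (E (.ann q (.er (.sub (toTm M) (envToSub e)))))
    | ap {π D E} (q V W) : CtxDen π D E →
        TmDen (⟨q, .ap, .nil⟩ :: π) (W :: V :: D) (E (.ann q (.ap (valToTm V) (valToTm W))))
    | lt {π D E} (q N e V) : CtxDen π D E →
        TmDen (⟨q, .lt N, e⟩ :: π) (V :: D)
          (E (.ann q (.lets (valToTm V)
            (.er (.sub (toTm N) (.cons .one (.comp (envToSub e) .sh)))))))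
    | bg {π D E} (q V) : CtxDen π D E →
        TmDen (⟨q, .bg, .nil⟩ :: π) (V :: D) (E (.ann q (.bang .r (valToTm V))))
    | ins {π D E} (q) (vs : List Val) : vs.length = 9 → CtxDen π D E →
        TmDen (⟨q, .ins, .nil⟩ :: π) (vs ++ D)
          (E (.ann q (.insp fun i => valToTm (vs.getD (i : ℕ) default))))
end

/-- The trail-collection operator `I(q_ϑ, π, D)` materializing the trail of the
enclosing bang for trail inspection. -/
inductive IRel (nfq : Tr → Tr) : Tr → Stack → Dump → Tr → Prop
  | bg {qθ π D} (q') : IRel nfq qθ (⟨q', .bg, .nil⟩ :: π) D (nfq qθ)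
  | apTm {qθ π D res} (q q' M e) :
      IRel nfq (.t q' (.ap qθ q)) π D res →
      IRel nfq qθ (⟨q, .tm M, e⟩ :: ⟨q', .ap, .nil⟩ :: π) D res
  | apVal {qθ π D res} (q q'' C) :
      IRel nfq (.t q (.ap q'' qθ)) π D res →
      IRel nfq qθ (⟨q, .ap, .nil⟩ :: π) (Val.mk q'' C :: D) res
  | lt {qθ π D res} (q N e) :
      IRel nfq (.t q (.lets qθ .r)) π D res →
      IRel nfq qθ (⟨q, .lt N, e⟩ :: π) D res
  | ins {qθ π D res} (q') (ts : List (Tr × NTm × Env)) (vs : List Val) :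
      vs.length + ts.length = 8 →
      IRel nfq (.t q' (.tb fun i =>
          if h : (i : ℕ) < vs.length then (vs.get ⟨i, h⟩).tr
          else if (i : ℕ) = vs.length then qθ
          else (ts.getD ((i : ℕ) - vs.length - 1) default).1)) π D res →
      IRel nfq qθ (ts.map brTup ++ ⟨q', .ins, .nil⟩ :: π) (vs ++ D) res

/-- The inspection trail of nine evaluated branches, as a term (de Bruijn encoding of
trail constructors as the dangling indices 1..9). -/
def tTT : Tr → NTm
  | .r => .var 0
  | .t q q' => .ap (.ap (.var 1) (tTT q)) (tTT q')
  | .pb => .var 2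
  | .pbb => .var 3
  | .ti => .var 4
  | .lam q => .ap (.var 5) (tTT q)
  | .ap q q' => .ap (.ap (.var 6) (tTT q)) (tTT q')
  | .lets q q' => .ap (.ap (.var 7) (tTT q)) (tTT q')
  | .tb ζ => (List.ofFn fun i => tTT (ζ i)).foldl .ap (.var 8)
  | .ext _ => .var 0

/-- The environment `[r ▷ C₁, …, r ▷ C₉]` of inspection branches. -/
def mkEnv (vs : List Val) : Env := vs.foldr (fun V e => .cons (.mk .r V.clo) e) .nil

/-- Transition relation of the call-by-value abstract machine. -/
inductive MStep (nfq : Tr → Tr) : Config → Config → Prop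
  | r1 {π D} (q M N e) :
      MStep nfq (⟨q, .tm (.ap M N), e⟩ :: π, D)
        (⟨.r, .tm M, e⟩ :: ⟨.r, .tm N, e⟩ :: ⟨q, .ap, .nil⟩ :: π, D)
  | r2 {π D} (q q' C q'' M e) :
      MStep nfq (⟨q, .ap, .nil⟩ :: π, Val.mk q' C :: Val.mk q'' (.lamC M e) :: D)
        (⟨.t q (.t (.ap q'' q') .pb), .tm M, .cons (.mk .r C) e⟩ :: π, D)
  | r3 {π D} (q M e) :
      MStep nfq (⟨q, .tm (.lam M), e⟩ :: π, D) (π, Val.mk q (.lamC M e) :: D)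
  | r4 {π D} (q M N e) :
      MStep nfq (⟨q, .tm (.lets M N), e⟩ :: π, D)
        (⟨.r, .tm M, e⟩ :: ⟨q, .lt N, e⟩ :: π, D)
  | r5 {π D} (q N e q' V) :
      MStep nfq (⟨q, .lt N, e⟩ :: π, Val.mk q' (.bangC V.tr V.clo) :: D)
        (⟨.t q (.t (.lets q' .r) (.t .pbb
            (.ext (.sub (.er (.sub (toTm N) (.cons .one (.comp (envToSub e) .sh))))
              (.cons (valToTm V) .id))))),
          .tm N, .cons V e⟩ :: π, D)
  | r6 {π D} (q q' M e) :
      MStep nfq (⟨q, .tm (.bang q' M), e⟩ :: π, D)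
        (⟨.t (toTr q') (.ext (.sub (toTm M) (envToSub e))), .tm M, e⟩ :: ⟨q, .bg, .nil⟩ :: π, D)
  | r7 {π D} (q V) :
      MStep nfq (⟨q, .bg, .nil⟩ :: π, V :: D) (π, Val.mk q (.bangC V.tr V.clo) :: D)
  | r8 {π D} (q ϑ e) :
      MStep nfq (⟨q, .tm (.insp ϑ), e⟩ :: π, D)
        ((List.ofFn fun i : Fin 9 => Tup.mk .r (.tm (ϑ i)) e) ++ ⟨q, .ins, .nil⟩ :: π, D)
  | r9 {π D} (q) (vs : List Val) (qres : Tr) :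
      vs.length = 9 →
      IRel nfq (.t q (.tb fun i => (vs.getD (i : ℕ) default).tr)) π D qres →
      MStep nfq (⟨q, .ins, .nil⟩ :: π, vs ++ D)
        (⟨.t q (.t (.tb fun i => (vs.getD (i : ℕ) default).tr) .ti),
          .tm (tTT qres), mkEnv vs⟩ :: π, D)
  | r10 {π D} (q n e C) :
      lookupE e n = some C →
      MStep nfq (⟨q, .tm (.var n), e⟩ :: π, D) (π, Val.mk q C :: D)

/-- Closedness conditions on stack tuples. -/
def TupClosed : Tup → Prop
  | ⟨_, .tm M, e⟩ => closedN (envLen e) M ∧ closedEnv e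
  | ⟨_, .lt N, e⟩ => closedN (envLen e + 1) N ∧ closedEnv e
  | ⟨_, _, e⟩ => closedEnv e

/-- Valid machine states: well-formed term configurations whose tuples and dump
values are closed. -/
def Valid (ς : Config) : Prop :=
  WfTm ς.1 ς.2 ∧ (∀ t ∈ ς.1, TupClosed t) ∧ (∀ V ∈ ς.2, closedVal V)

end CAU

namespace CAU

/-! ### Termination measures -/

/-- Weight of a trail. -/
def wq : NTr → ℕ
  | .r => 2
  | .pb => 2
  | .pbb => 2
  | .ti => 2
  | .t a b => wq a * (wq b + 1)
  | .lam a => wq a + 1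
  | .ap a b => wq a + wq b
  | .lets a b => wq a + wq b
  | .tb ζ => ∑ i, wq (ζ i)

lemma wq_ge2 (q : NTr) : 2 ≤ wq q := by
  induction q with
  | r => simp [wq]
  | pb => simp [wq]
  | pbb => simp [wq]
  | ti => simp [wq]
  | t a b iha ihb => simp only [wq]; nlinarith
  | lam a ih => simp only [wq]; omega
  | ap a b iha ihb => simp only [wq]; omega
  | lets a b iha ihb => simp only [wq]; omega
  | tb ζ ih =>
      show 2 ≤ ∑ i, wq (ζ i)
      calc (2:ℕ) ≤ wq (ζ 0) := ih 0
      _ ≤ ∑ i, wq (ζ i) := Finset.single_le_sum (f := fun i => wq (ζ i)) (fun i _ => Nat.zero_le _) (Finset.mem_univ (0 : Fin 9))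

lemma wq_pos (q : NTr) : 0 < wq q := lt_of_lt_of_le (by norm_num) (wq_ge2 q)

lemma sum_wq_ge2 (ζ : Fin 9 → NTr) : 2 ≤ ∑ i, wq (ζ i) :=
  le_trans (wq_ge2 (ζ 0))
    (Finset.single_le_sum (f := fun i => wq (ζ i)) (fun i _ => Nat.zero_le _) (Finset.mem_univ (0 : Fin 9)))

/-- key sum inequality: (∑a)*(∑b) ≥ ∑ aᵢbᵢ + 2∑a -/
lemma sum_mul_sum_ge (a b : Fin 9 → ℕ) (ha : ∀ i, 2 ≤ a i) (hb : ∀ i, 2 ≤ b i) :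
    (∑ i, a i * b i) + 2 * (∑ i, a i) ≤ (∑ i, a i) * (∑ i, b i) := by
  have hB : ∀ i : Fin 9, b i + 2 ≤ ∑ j, b j := by
    intro i
    set j : Fin 9 := if i = 0 then 1 else 0 with hj
    have hne : i ≠ j := by by_cases h : i = 0 <;> simp [hj, h]
    have h1 : b i + b j ≤ ∑ k, b k := by
      calc b i + b j = ∑ k ∈ ({i, j} : Finset (Fin 9)), b k := (Finset.sum_pair hne).symm
      _ ≤ ∑ k, b k := Finset.sum_le_sum_of_subset (Finset.subset_univ _)
    have := hb j
    omega
  calc (∑ i, a i * b i) + 2 * (∑ i, a i)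
      = ∑ i, (a i * b i + 2 * a i) := by rw [Finset.sum_add_distrib, Finset.mul_sum]
    _ = ∑ i, a i * (b i + 2) := by
        apply Finset.sum_congr rfl; intro i _; ring
    _ ≤ ∑ i, a i * (∑ j, b j) := by
        apply Finset.sum_le_sum
        intro i _
        exact Nat.mul_le_mul_left _ (hB i)
    _ = (∑ i, a i) * (∑ j, b j) := by rw [← Finset.sum_mul]

lemma arith_T (a b c d e : ℕ) (ha : 2 ≤ a) (hb : 2 ≤ b) (hc : 2 ≤ c) (hd : 2 ≤ d)
    (he : 1 ≤ e) : (a*(c+1)+b*(d+1))*(e+1) < (a+b)*((c+d)*(e+1)+1) := by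
  have h1 : a*e*2 ≤ a*e*d := Nat.mul_le_mul_left _ hd
  have h2 : b*e*2 ≤ b*e*c := Nat.mul_le_mul_left _ hc
  nlinarith

lemma tbC_sum_lt {ζ : Fin 9 → NTr} (i : Fin 9) {q' : NTr} (h : wq q' < wq (ζ i)) :
    (∑ j, wq (Function.update ζ i q' j)) < ∑ j, wq (ζ j) := by
  rw [← Finset.add_sum_erase _ (fun j => wq (Function.update ζ i q' j)) (Finset.mem_univ i),
      ← Finset.add_sum_erase _ (fun j => wq (ζ j)) (Finset.mem_univ i)]
  have he : ∑ j ∈ Finset.univ.erase i, wq (Function.update ζ i q' j)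
      = ∑ j ∈ Finset.univ.erase i, wq (ζ j) := by
    apply Finset.sum_congr rfl
    intro j hj
    rw [Function.update_of_ne (Finset.ne_of_mem_erase hj)]
  rw [Function.update_self, he]
  omega

lemma wq_lt_of_step {q q' : NTr} (h : TStepQ q q') : wq q' < wq q := by
  induction h with
  | tReflR q => simp only [wq]; nlinarith [wq_pos q]
  | tReflL q => simp only [wq]; omega
  | tbRefl => simp [wq]
  | apRefl => simp [wq]
  | lamRefl => simp [wq]
  | letsRefl => simp [wq]
  | tAssoc q₁ q₂ q₃ => simp only [wq]; nlinarith [wq_pos q₁, wq_pos q₂, wq_pos q₃]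
  | tLam q q' => simp only [wq]; nlinarith [wq_pos q, wq_pos q']
  | tLamT q₁ q₁' q => simp only [wq]; nlinarith [wq_pos q₁, wq_pos q₁', wq_pos q]
  | tAp q₁ q₂ q₁' q₂' =>
      simp only [wq]; nlinarith [wq_ge2 q₁, wq_ge2 q₂, wq_ge2 q₁', wq_ge2 q₂']
  | tApT q₁ q₂ q₁' q₂' q =>
      simp only [wq]
      exact arith_T _ _ _ _ _ (wq_ge2 q₁) (wq_ge2 q₂) (wq_ge2 q₁') (wq_ge2 q₂')
        (le_trans (by norm_num) (wq_ge2 q))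
  | tLets q₁ q₂ q₁' q₂' =>
      simp only [wq]; nlinarith [wq_ge2 q₁, wq_ge2 q₂, wq_ge2 q₁', wq_ge2 q₂']
  | tLetsT q₁ q₂ q₁' q₂' q =>
      simp only [wq]
      exact arith_T _ _ _ _ _ (wq_ge2 q₁) (wq_ge2 q₂) (wq_ge2 q₁') (wq_ge2 q₂')
        (le_trans (by norm_num) (wq_ge2 q))
  | tTb ζ₁ ζ₂ =>
      show (∑ i, wq (NTr.t (ζ₁ i) (ζ₂ i))) < (∑ i, wq (ζ₁ i)) * ((∑ i, wq (ζ₂ i)) + 1)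
      have key : (∑ i, wq (ζ₁ i) * wq (ζ₂ i)) + 2*(∑ i, wq (ζ₁ i))
          ≤ (∑ i, wq (ζ₁ i)) * (∑ i, wq (ζ₂ i)) :=
        sum_mul_sum_ge _ _ (fun i => wq_ge2 _) (fun i => wq_ge2 _)
      have hL : (∑ i, wq (NTr.t (ζ₁ i) (ζ₂ i)))
          = (∑ i, wq (ζ₁ i) * wq (ζ₂ i)) + (∑ i, wq (ζ₁ i)) := by
        rw [← Finset.sum_add_distrib]
        apply Finset.sum_congr rfl
        intro i _
        show wq (ζ₁ i) * (wq (ζ₂ i) + 1) = _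
        ring
      have hp := sum_wq_ge2 ζ₁
      rw [hL, Nat.mul_add, Nat.mul_one]
      omega
  | tTbT ζ₁ ζ₂ q =>
      show (∑ i, wq (NTr.t (ζ₁ i) (ζ₂ i))) * (wq q + 1)
          < (∑ i, wq (ζ₁ i)) * ((∑ i, wq (ζ₂ i)) * (wq q + 1) + 1)
      have key : (∑ i, wq (ζ₁ i) * wq (ζ₂ i)) + 2*(∑ i, wq (ζ₁ i))
          ≤ (∑ i, wq (ζ₁ i)) * (∑ i, wq (ζ₂ i)) :=
        sum_mul_sum_ge _ _ (fun i => wq_ge2 _) (fun i => wq_ge2 _)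
      have hL : (∑ i, wq (NTr.t (ζ₁ i) (ζ₂ i)))
          = (∑ i, wq (ζ₁ i) * wq (ζ₂ i)) + (∑ i, wq (ζ₁ i)) := by
        rw [← Finset.sum_add_distrib]
        apply Finset.sum_congr rfl
        intro i _
        show wq (ζ₁ i) * (wq (ζ₂ i) + 1) = _
        ring
      have hp := sum_wq_ge2 ζ₁
      have hq := wq_pos q
      rw [hL]
      nlinarith
  | tL q' h ih =>
      simp only [wq]
      exact (Nat.mul_lt_mul_right (Nat.succ_pos _)).mpr ih
  | tR q h ih =>
      simp only [wq]
      exact (Nat.mul_lt_mul_left (wq_pos _)).mpr (by omega)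
  | lamC h ih => simp only [wq]; omega
  | apL q' h ih => simp only [wq]; omega
  | apR q h ih => simp only [wq]; omega
  | letsL q' h ih => simp only [wq]; omega
  | letsR q h ih => simp only [wq]; omega
  | @tbC ζ i q2 h ih =>
      show (∑ j, wq (Function.update ζ i q2 j)) < ∑ j, wq (ζ j)
      exact tbC_sum_lt i ih

theorem snQ : WellFounded fun q q' : NTr => TStepQ q' q := by
  have hs : Subrelation (fun q q' : NTr => TStepQ q' q) (InvImage (· < ·) wq) :=
    fun h => wq_lt_of_step h
  exact Subrelation.wf hs (InvImage.wf wq Nat.lt_wfRel.wf)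

end CAU
namespace CAU

/-- Weight of a term (ignoring trails). -/
def wm : NTm → ℕ
  | .var _ => 2
  | .lam M => 2 * wm M
  | .ap M N => wm M * wm N
  | .lets M N => wm M * wm N
  | .bang _ M => wm M + 1
  | .ann _ M => wm M + 1
  | .insp ϑ => ∏ i, wm (ϑ i)

/-- Total weight of trails occurring in a term. -/
def ts : NTm → ℕ
  | .var _ => 0
  | .lam M => ts M
  | .ap M N => ts M + ts N
  | .lets M N => ts M + ts N
  | .bang q M => wq q + ts M
  | .ann q M => wq q + ts M
  | .insp ϑ => ∑ i, ts (ϑ i)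

lemma wm_ge2 (M : NTm) : 2 ≤ wm M := by
  induction M with
  | var n => simp [wm]
  | lam M ih => simp only [wm]; omega
  | ap M N ihM ihN => simp only [wm]; nlinarith
  | lets M N ihM ihN => simp only [wm]; nlinarith
  | bang q M ih => simp only [wm]; omega
  | ann q M ih => simp only [wm]; omega
  | insp ϑ ih =>
      show 2 ≤ ∏ i, wm (ϑ i)
      calc (2:ℕ) ≤ wm (ϑ 0) := ih 0
      _ ≤ ∏ i, wm (ϑ i) :=
        Finset.single_le_prod' (f := fun i => wm (ϑ i))
          (fun i _ => le_trans (by norm_num) (ih i)) (Finset.mem_univ (0 : Fin 9))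

lemma wm_pos (M : NTm) : 0 < wm M := lt_of_lt_of_le (by norm_num) (wm_ge2 M)

lemma prod_update_lt {ϑ : Fin 9 → NTm} (i : Fin 9) {M' : NTm} (h : wm M' < wm (ϑ i)) :
    (∏ j, wm (Function.update ϑ i M' j)) < ∏ j, wm (ϑ j) := by
  rw [← Finset.prod_erase_mul _ (fun j => wm (Function.update ϑ i M' j)) (Finset.mem_univ i),
      ← Finset.prod_erase_mul _ (fun j => wm (ϑ j)) (Finset.mem_univ i)]
  have he : ∏ j ∈ Finset.univ.erase i, wm (Function.update ϑ i M' j)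
      = ∏ j ∈ Finset.univ.erase i, wm (ϑ j) := by
    apply Finset.prod_congr rfl
    intro j hj
    rw [Function.update_of_ne (Finset.ne_of_mem_erase hj)]
  rw [Function.update_self, he]
  have hp : 0 < ∏ j ∈ Finset.univ.erase i, wm (ϑ j) :=
    Finset.prod_pos (fun j _ => wm_pos _)
  exact Nat.mul_lt_mul_of_le_of_lt (le_refl _) h hp

lemma sum_update_lt_ts {ϑ : Fin 9 → NTm} (i : Fin 9) {M' : NTm} (h : ts M' < ts (ϑ i)) :
    (∑ j, ts (Function.update ϑ i M' j)) < ∑ j, ts (ϑ j) := by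
  rw [← Finset.add_sum_erase _ (fun j => ts (Function.update ϑ i M' j)) (Finset.mem_univ i),
      ← Finset.add_sum_erase _ (fun j => ts (ϑ j)) (Finset.mem_univ i)]
  have he : ∑ j ∈ Finset.univ.erase i, ts (Function.update ϑ i M' j)
      = ∑ j ∈ Finset.univ.erase i, ts (ϑ j) := by
    apply Finset.sum_congr rfl
    intro j hj
    rw [Function.update_of_ne (Finset.ne_of_mem_erase hj)]
  rw [Function.update_self, he]
  omega

lemma wm_update_eq {ϑ : Fin 9 → NTm} (i : Fin 9) {M' : NTm} (h : wm M' = wm (ϑ i)) :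
    (∏ j, wm (Function.update ϑ i M' j)) = ∏ j, wm (ϑ j) := by
  apply Finset.prod_congr rfl
  intro j _
  by_cases hj : j = i
  · subst hj; rw [Function.update_self, h]
  · rw [Function.update_of_ne hj]

lemma wm_lt_or_ts_lt {M N : NTm} (h : TStepN M N) :
    wm N < wm M ∨ (wm N = wm M ∧ ts N < ts M) := by
  induction h with
  | annRefl M => left; simp only [wm]; omega
  | annAnn q q' M => left; simp only [wm]; omega
  | bangAnn q q' M => left; simp only [wm]; omega
  | lamAnn q M => left; simp only [wm]; omega
  | apAnnL q M N => left; simp only [wm]; nlinarith [wm_ge2 M, wm_ge2 N]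
  | apAnnR q M N => left; simp only [wm]; nlinarith [wm_ge2 M, wm_ge2 N]
  | letsAnnL q M N => left; simp only [wm]; nlinarith [wm_ge2 M, wm_ge2 N]
  | letsAnnR q M N => left; simp only [wm]; nlinarith [wm_ge2 M, wm_ge2 N]
  | inspAnn ϑ i q M hi =>
      left
      show wm (.ann _ (.insp _)) < wm (.insp ϑ)
      simp only [wm]
      have hP : 2 ≤ ∏ j ∈ Finset.univ.erase i, wm (ϑ j) := by
        set j : Fin 9 := if i = 0 then 1 else 0 with hjd
        have hne : j ≠ i := by by_cases h : i = 0 <;> simp [hjd, h] <;> exact fun hh => h hh.symm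
        have hmem : j ∈ Finset.univ.erase i := Finset.mem_erase.mpr ⟨hne, Finset.mem_univ _⟩
        calc (2:ℕ) ≤ wm (ϑ j) := wm_ge2 _
        _ ≤ ∏ k ∈ Finset.univ.erase i, wm (ϑ k) :=
          Finset.single_le_prod' (fun k _ => le_trans (by norm_num) (wm_ge2 _)) hmem
      have hL : ∏ j, wm (ϑ j) = (wm M + 1) * ∏ j ∈ Finset.univ.erase i, wm (ϑ j) := by
        rw [← Finset.mul_prod_erase _ (fun j => wm (ϑ j)) (Finset.mem_univ i), hi]
        rfl
      have hR : (∏ j, wm (Function.update ϑ i M j))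
          = wm M * ∏ j ∈ Finset.univ.erase i, wm (ϑ j) := by
        rw [← Finset.mul_prod_erase _ (fun j => wm (Function.update ϑ i M j)) (Finset.mem_univ i),
            Function.update_self]
        congr 1
        apply Finset.prod_congr rfl
        intro k hk
        rw [Function.update_of_ne (Finset.ne_of_mem_erase hk)]
      rw [hL, hR]
      nlinarith [wm_pos M]
  | lamC h ih =>
      rcases ih with h' | ⟨h1, h2⟩
      · left; simp only [wm]; omega
      · right; constructor
        · simp only [wm]; omega
        · simpa only [ts] using h2
  | apL N h ih =>
      rcases ih with h' | ⟨h1, h2⟩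
      · left; simp only [wm]; exact Nat.mul_lt_mul_of_lt_of_le h' (le_refl _) (wm_pos _)
      · right; exact ⟨by simp only [wm]; rw [h1], by simp only [ts]; omega⟩
  | apR M h ih =>
      rcases ih with h' | ⟨h1, h2⟩
      · left; simp only [wm]; exact Nat.mul_lt_mul_of_le_of_lt (le_refl _) h' (wm_pos _)
      · right; exact ⟨by simp only [wm]; rw [h1], by simp only [ts]; omega⟩
  | letsL N h ih =>
      rcases ih with h' | ⟨h1, h2⟩
      · left; simp only [wm]; exact Nat.mul_lt_mul_of_lt_of_le h' (le_refl _) (wm_pos _)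
      · right; exact ⟨by simp only [wm]; rw [h1], by simp only [ts]; omega⟩
  | letsR M h ih =>
      rcases ih with h' | ⟨h1, h2⟩
      · left; simp only [wm]; exact Nat.mul_lt_mul_of_le_of_lt (le_refl _) h' (wm_pos _)
      · right; exact ⟨by simp only [wm]; rw [h1], by simp only [ts]; omega⟩
  | bangQ M h =>
      right
      constructor
      · simp only [wm]
      · simp only [ts]
        have := wq_lt_of_step h
        omega
  | bangM q h ih =>
      rcases ih with h' | ⟨h1, h2⟩
      · left; simp only [wm]; omega
      · right; simp only [wm, ts]; omega
  | annQ M h =>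
      right
      constructor
      · simp only [wm]
      · simp only [ts]
        have := wq_lt_of_step h
        omega
  | annM q h ih =>
      rcases ih with h' | ⟨h1, h2⟩
      · left; simp only [wm]; omega
      · right; simp only [wm, ts]; omega
  | @inspC ϑ i M' h ih =>
      rcases ih with h' | ⟨h1, h2⟩
      · left
        show (∏ j, wm (Function.update ϑ i M' j)) < ∏ j, wm (ϑ j)
        exact prod_update_lt i h'
      · right
        constructor
        · show (∏ j, wm (Function.update ϑ i M' j)) = ∏ j, wm (ϑ j)
          exact wm_update_eq i h1
        · show (∑ j, ts (Function.update ϑ i M' j)) < ∑ j, ts (ϑ j)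
          exact sum_update_lt_ts i h2

theorem snN : WellFounded fun M N : NTm => TStepN N M := by
  have hlex : WellFounded (Prod.Lex (α := ℕ) (β := ℕ) (· < ·) (· < ·)) :=
    WellFounded.prod_lex Nat.lt_wfRel.wf Nat.lt_wfRel.wf
  have hs : Subrelation (fun M N : NTm => TStepN N M)
      (InvImage (Prod.Lex (· < ·) (· < ·)) (fun M => (wm M, ts M))) := by
    intro a b h
    rcases wm_lt_or_ts_lt h with h' | ⟨h1, h2⟩
    · exact Prod.Lex.left _ _ h'
    · show Prod.Lex _ _ (wm a, ts a) (wm b, ts b)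
      rw [h1]
      exact Prod.Lex.right _ h2
  exact Subrelation.wf hs (InvImage.wf _ hlex)

end CAU
namespace CAU

/-! ### Smart constructors and composition of normal trails -/

def isR : NTr → Bool
  | .r => true
  | _ => false

lemma isR_iff (q : NTr) : isR q = true ↔ q = .r := by cases q <;> simp [isR]

instance decR (q : NTr) : Decidable (q = NTr.r) := decidable_of_iff _ (isR_iff q)

def tcons (m c : NTr) : NTr := if m = .r then c else .t m c

def slam (q : NTr) : NTr := if q = .r then .r else .lam q

def sap (a b : NTr) : NTr := if a = .r ∧ b = .r then .r else .ap a b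

def slets (a b : NTr) : NTr := if a = .r ∧ b = .r then .r else .lets a b

def stb (ζ : Fin 9 → NTr) : NTr := if ∀ i, ζ i = .r then .r else .tb ζ

/-- Composition of trails, merging adjacent congruences. -/
def scomp : NTr → NTr → NTr
  | .r, y => y
  | .t a b, y => scomp a (scomp b y)
  | .lam a, .lam b => slam (scomp a b)
  | .lam a, .t (.lam b) c => tcons (slam (scomp a b)) c
  | .ap a b, .ap a' b' => sap (scomp a a') (scomp b b')
  | .ap a b, .t (.ap a' b') c => tcons (sap (scomp a a') (scomp b b')) c
  | .lets a b, .lets a' b' => slets (scomp a a') (scomp b b')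
  | .lets a b, .t (.lets a' b') c => tcons (slets (scomp a a') (scomp b b')) c
  | .tb ζ, .tb ζ' => stb (fun i => scomp (ζ i) (ζ' i))
  | .tb ζ, .t (.tb ζ') c => tcons (stb (fun i => scomp (ζ i) (ζ' i))) c
  | x, .r => x
  | x, y => .t x y

/-- Head-constructor class, for mergeability. -/
def hd : NTr → ℕ
  | .lam _ => 1
  | .ap _ _ => 2
  | .lets _ _ => 3
  | .tb _ => 4
  | _ => 0

def headQ : NTr → NTr
  | .t h _ => h
  | y => y

/-- Mergeable adjacent heads. -/
def Mg (e h : NTr) : Prop := hd e ≠ 0 ∧ hd e = hd h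

/-- Grammar of normal trails: `NF false` = normal elements, `NF true` = normal trails. -/
inductive NF : Bool → NTr → Prop
  | r : NF true .r
  | pb : NF false .pb
  | pbb : NF false .pbb
  | ti : NF false .ti
  | lam {a} : NF true a → a ≠ .r → NF false (.lam a)
  | ap {a b} : NF true a → NF true b → ¬(a = .r ∧ b = .r) → NF false (.ap a b)
  | lets {a b} : NF true a → NF true b → ¬(a = .r ∧ b = .r) → NF false (.lets a b)
  | tb {ζ} : (∀ i, NF true (ζ i)) → ¬(∀ i, ζ i = .r) → NF false (.tb ζ)
  | single {e} : NF false e → NF true e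
  | cons {e x} : NF false e → NF true x → x ≠ .r → ¬ Mg e (headQ x) → NF true (.t e x)

abbrev NQ (q : NTr) : Prop := NF true q
abbrev NE (e : NTr) : Prop := NF false e

end CAU
namespace CAU

/-! ### Inversion lemmas for normal-form grammar -/

lemma NF.ne_r {e : NTr} (h : NE e) : e ≠ .r := by cases h <;> simp
lemma NF.ne_t {e : NTr} (h : NE e) : ∀ a b, e ≠ .t a b := by cases h <;> simp

lemma NF.inv_t {e x : NTr} (h : NQ (.t e x)) :
    NE e ∧ NQ x ∧ x ≠ .r ∧ ¬ Mg e (headQ x) := by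
  cases h with
  | single h => cases h
  | cons h1 h2 h3 h4 => exact ⟨h1, h2, h3, h4⟩

lemma NF.inv_lam {a : NTr} (h : NQ (.lam a)) : NQ a ∧ a ≠ .r := by
  cases h with
  | single h => cases h with | lam h1 h2 => exact ⟨h1, h2⟩

lemma NF.inv_ap {a b : NTr} (h : NQ (.ap a b)) : NQ a ∧ NQ b ∧ ¬(a = .r ∧ b = .r) := by
  cases h with
  | single h => cases h with | ap h1 h2 h3 => exact ⟨h1, h2, h3⟩

lemma NF.inv_lets {a b : NTr} (h : NQ (.lets a b)) : NQ a ∧ NQ b ∧ ¬(a = .r ∧ b = .r) := by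
  cases h with
  | single h => cases h with | lets h1 h2 h3 => exact ⟨h1, h2, h3⟩

lemma NF.inv_tb {ζ : Fin 9 → NTr} (h : NQ (.tb ζ)) : (∀ i, NQ (ζ i)) ∧ ¬(∀ i, ζ i = .r) := by
  cases h with
  | single h => cases h with | tb h1 h2 => exact ⟨h1, h2⟩

lemma NF.of_NQ {e : NTr} (h : NQ e) (h1 : e ≠ .r) (h2 : ∀ a b, e ≠ .t a b) : NE e := by
  cases h with
  | r => exact absurd rfl h1
  | single h => exact h
  | cons _ _ _ _ => exact absurd rfl (h2 _ _)

/-! ### Smart constructors preserve normality -/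

lemma NQ_slam {a : NTr} (h : NQ a) : NQ (slam a) := by
  unfold slam; split
  · exact NF.r
  · exact NF.single (NF.lam h (by assumption))

lemma NQ_sap {a b : NTr} (ha : NQ a) (hb : NQ b) : NQ (sap a b) := by
  unfold sap; split
  · exact NF.r
  · exact NF.single (NF.ap ha hb (by assumption))

lemma NQ_slets {a b : NTr} (ha : NQ a) (hb : NQ b) : NQ (slets a b) := by
  unfold slets; split
  · exact NF.r
  · exact NF.single (NF.lets ha hb (by assumption))

lemma NQ_stb {ζ : Fin 9 → NTr} (h : ∀ i, NQ (ζ i)) : NQ (stb ζ) := by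
  unfold stb; split
  · exact NF.r
  · exact NF.single (NF.tb h (by assumption))

lemma hd_slam (a : NTr) : hd (slam a) = 0 ∨ hd (slam a) = 1 := by
  unfold slam; split <;> simp [hd]
lemma hd_sap (a b : NTr) : hd (sap a b) = 0 ∨ hd (sap a b) = 2 := by
  unfold sap; split <;> simp [hd]
lemma hd_slets (a b : NTr) : hd (slets a b) = 0 ∨ hd (slets a b) = 3 := by
  unfold slets; split <;> simp [hd]
lemma hd_stb (ζ : Fin 9 → NTr) : hd (stb ζ) = 0 ∨ hd (stb ζ) = 4 := by
  unfold stb; split <;> simp [hd]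

/-- scomp on a non-mergeable pair is plain composition. -/
lemma scomp_nomerge {x y : NTr} (h1 : x ≠ .r) (h2 : ∀ a b, x ≠ .t a b) (h3 : y ≠ .r)
    (h4 : ¬ Mg x (headQ y)) : scomp x y = .t x y := by
  rw [scomp.eq_def]
  split
  · exact absurd rfl h1
  · exact absurd rfl (h2 _ _)
  · exact absurd ⟨by simp [hd], by simp [hd, headQ]⟩ h4
  · exact absurd ⟨by simp [hd], by simp [hd, headQ]⟩ h4
  · exact absurd ⟨by simp [hd], by simp [hd, headQ]⟩ h4
  · exact absurd ⟨by simp [hd], by simp [hd, headQ]⟩ h4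
  · exact absurd ⟨by simp [hd], by simp [hd, headQ]⟩ h4
  · exact absurd ⟨by simp [hd], by simp [hd, headQ]⟩ h4
  · exact absurd ⟨by simp [hd], by simp [hd, headQ]⟩ h4
  · exact absurd ⟨by simp [hd], by simp [hd, headQ]⟩ h4
  · exact absurd rfl h3
  · rfl

end CAU
namespace CAU

lemma not_Mg_of_nomatch {x y : NTr}
    (h3 : ∀ a b : NTr, x = .lam a → y = .lam b → False)
    (h4 : ∀ a b c : NTr, x = .lam a → y = NTr.t (.lam b) c → False)
    (h5 : ∀ a b a' b' : NTr, x = .ap a b → y = .ap a' b' → False)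
    (h6 : ∀ a b a' b' c : NTr, x = .ap a b → y = NTr.t (.ap a' b') c → False)
    (h7 : ∀ a b a' b' : NTr, x = .lets a b → y = .lets a' b' → False)
    (h8 : ∀ a b a' b' c : NTr, x = .lets a b → y = NTr.t (.lets a' b') c → False)
    (h9 : ∀ ζ ζ' : Fin 9 → NTr, x = .tb ζ → y = .tb ζ' → False)
    (h10 : ∀ (ζ ζ' : Fin 9 → NTr) (c : NTr), x = .tb ζ → y = NTr.t (.tb ζ') c → False) :
    ¬ Mg x (headQ y) := by
  rintro ⟨h0, hEq⟩
  cases x with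
  | lam a =>
      cases y with
      | lam b => exact h3 _ _ rfl rfl
      | t h c => cases h <;> simp [hd, headQ] at hEq; exact h4 _ _ _ rfl rfl
      | _ => simp [hd, headQ] at hEq
  | ap a b =>
      cases y with
      | ap a' b' => exact h5 _ _ _ _ rfl rfl
      | t h c => cases h <;> simp [hd, headQ] at hEq; exact h6 _ _ _ _ _ rfl rfl
      | _ => simp [hd, headQ] at hEq
  | lets a b =>
      cases y with
      | lets a' b' => exact h7 _ _ _ _ rfl rfl
      | t h c => cases h <;> simp [hd, headQ] at hEq; exact h8 _ _ _ _ _ rfl rfl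
      | _ => simp [hd, headQ] at hEq
  | tb ζ =>
      cases y with
      | tb ζ' => exact h9 _ _ rfl rfl
      | t h c => cases h <;> simp [hd, headQ] at hEq; exact h10 _ _ _ rfl rfl
      | _ => simp [hd, headQ] at hEq
  | _ => simp [hd] at h0

theorem scomp_spec : ∀ x y, NQ x → NQ y →
    NQ (scomp x y) ∧ (scomp x y = .r → x = .r ∧ y = .r) := by
  intro x y
  induction x, y using scomp.induct with
  | case1 y =>
      intro _ hy
      simp only [scomp]
      exact ⟨hy, fun h => ⟨by trivial, h⟩⟩
  | case2 a b y ih1 ih2 =>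
      intro hx hy
      obtain ⟨hea, hb, hbr, hmg⟩ := hx.inv_t
      have h1 := ih1 hb hy
      have h2 := ih2 (NF.single hea) h1.1
      simp only [scomp]
      refine ⟨h2.1, fun h => absurd ((h2.2 h).1) hea.ne_r⟩
  | case3 a b ih =>
      intro hx hy
      simp only [scomp]
      obtain ⟨ha, har⟩ := hx.inv_lam
      obtain ⟨hb, hbr⟩ := hy.inv_lam
      have h := ih ha hb
      have hne : scomp a b ≠ .r := fun hh => hbr (h.2 hh).2
      rw [slam, if_neg hne]
      exact ⟨NF.single (NF.lam h.1 hne), by simp⟩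
  | case4 a b c ih =>
      intro hx hy
      simp only [scomp]
      obtain ⟨ha, har⟩ := hx.inv_lam
      obtain ⟨heb, hc, hcr, hmg⟩ := hy.inv_t
      obtain ⟨hb, hbr⟩ := NF.inv_lam (NF.single heb)
      have h := ih ha hb
      have hne : scomp a b ≠ .r := fun hh => hbr (h.2 hh).2
      rw [slam, if_neg hne, tcons, if_neg (by simp)]
      refine ⟨NF.cons (NF.lam h.1 hne) hc hcr ?_, by simp⟩
      intro ⟨m1, m2⟩
      exact hmg ⟨by simp [hd], by simpa [hd] using m2⟩
  | case5 a b a' b' ih1 ih2 =>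
      intro hx hy
      simp only [scomp]
      obtain ⟨ha, hb, hr⟩ := hx.inv_ap
      obtain ⟨ha', hb', hr'⟩ := hy.inv_ap
      have h1 := ih1 ha ha'
      have h2 := ih2 hb hb'
      have hne : ¬(scomp a a' = .r ∧ scomp b b' = .r) := by
        rintro ⟨u, v⟩
        exact hr ⟨(h1.2 u).1, (h2.2 v).1⟩
      rw [sap, if_neg hne]
      exact ⟨NF.single (NF.ap h1.1 h2.1 hne), by simp⟩
  | case6 a b a' b' c ih1 ih2 =>
      intro hx hy
      simp only [scomp]
      obtain ⟨ha, hb, hr⟩ := hx.inv_ap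
      obtain ⟨heb, hc, hcr, hmg⟩ := hy.inv_t
      obtain ⟨ha', hb', hr'⟩ := NF.inv_ap (NF.single heb)
      have h1 := ih1 ha ha'
      have h2 := ih2 hb hb'
      have hne : ¬(scomp a a' = .r ∧ scomp b b' = .r) := by
        rintro ⟨u, v⟩
        exact hr ⟨(h1.2 u).1, (h2.2 v).1⟩
      rw [sap, if_neg hne, tcons, if_neg (by simp)]
      refine ⟨NF.cons (NF.ap h1.1 h2.1 hne) hc hcr ?_, by simp⟩
      intro ⟨m1, m2⟩
      exact hmg ⟨by simp [hd], by simpa [hd] using m2⟩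
  | case7 a b a' b' ih1 ih2 =>
      intro hx hy
      simp only [scomp]
      obtain ⟨ha, hb, hr⟩ := hx.inv_lets
      obtain ⟨ha', hb', hr'⟩ := hy.inv_lets
      have h1 := ih1 ha ha'
      have h2 := ih2 hb hb'
      have hne : ¬(scomp a a' = .r ∧ scomp b b' = .r) := by
        rintro ⟨u, v⟩
        exact hr ⟨(h1.2 u).1, (h2.2 v).1⟩
      rw [slets, if_neg hne]
      exact ⟨NF.single (NF.lets h1.1 h2.1 hne), by simp⟩
  | case8 a b a' b' c ih1 ih2 =>
      intro hx hy
      simp only [scomp]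
      obtain ⟨ha, hb, hr⟩ := hx.inv_lets
      obtain ⟨heb, hc, hcr, hmg⟩ := hy.inv_t
      obtain ⟨ha', hb', hr'⟩ := NF.inv_lets (NF.single heb)
      have h1 := ih1 ha ha'
      have h2 := ih2 hb hb'
      have hne : ¬(scomp a a' = .r ∧ scomp b b' = .r) := by
        rintro ⟨u, v⟩
        exact hr ⟨(h1.2 u).1, (h2.2 v).1⟩
      rw [slets, if_neg hne, tcons, if_neg (by simp)]
      refine ⟨NF.cons (NF.lets h1.1 h2.1 hne) hc hcr ?_, by simp⟩
      intro ⟨m1, m2⟩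
      exact hmg ⟨by simp [hd], by simpa [hd] using m2⟩
  | case9 ζ ζ' ih =>
      intro hx hy
      simp only [scomp]
      obtain ⟨hζ, hr⟩ := hx.inv_tb
      obtain ⟨hζ', hr'⟩ := hy.inv_tb
      have h := fun i => ih i (hζ i) (hζ' i)
      have hne : ¬(∀ i, scomp (ζ i) (ζ' i) = .r) := by
        intro hh
        exact hr (fun i => ((h i).2 (hh i)).1)
      rw [stb, if_neg hne]
      exact ⟨NF.single (NF.tb (fun i => (h i).1) hne), by simp⟩
  | case10 ζ ζ' c ih =>
      intro hx hy
      simp only [scomp]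
      obtain ⟨hζ, hr⟩ := hx.inv_tb
      obtain ⟨heb, hc, hcr, hmg⟩ := hy.inv_t
      obtain ⟨hζ', hr'⟩ := NF.inv_tb (NF.single heb)
      have h := fun i => ih i (hζ i) (hζ' i)
      have hne : ¬(∀ i, scomp (ζ i) (ζ' i) = .r) := by
        intro hh
        exact hr (fun i => ((h i).2 (hh i)).1)
      rw [stb, if_neg hne, tcons, if_neg (by simp)]
      refine ⟨NF.cons (NF.tb (fun i => (h i).1) hne) hc hcr ?_, by simp⟩
      intro ⟨m1, m2⟩
      exact hmg ⟨by simp [hd], by simpa [hd] using m2⟩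
  | case11 x hx1 hx2 =>
      intro hx _
      rw [scomp.eq_def]
      split
      · exact ⟨NF.r, fun _ => ⟨rfl, rfl⟩⟩
      · exact absurd rfl (hx2 _ _)
      all_goals first
        | exact ⟨hx, fun h => ⟨h, rfl⟩⟩
        | simp_all
  | case12 x y hx1 hx2 h3 h4 h5 h6 h7 h8 h9 h10 hy1 =>
      intro hx hy
      have hmg := not_Mg_of_nomatch h3 h4 h5 h6 h7 h8 h9 h10
      rw [scomp_nomerge (fun h => hx1 h) (fun a b h => hx2 a b h) (fun h => hy1 h) hmg]
      exact ⟨NF.cons (NF.of_NQ hx (fun h => hx1 h) (fun a b h => hx2 a b h)) hy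
        (fun h => hy1 h) hmg, by simp⟩

lemma NQ_scomp {x y : NTr} (hx : NQ x) (hy : NQ y) : NQ (scomp x y) :=
  (scomp_spec x y hx hy).1

lemma scomp_ne_r {x y : NTr} (hx : NQ x) (hy : NQ y) (h : ¬(x = .r ∧ y = .r)) :
    scomp x y ≠ .r := fun hh => h ((scomp_spec x y hx hy).2 hh)

lemma scomp_elem_r {x : NTr} (h2 : ∀ a b, x ≠ .t a b) : scomp x .r = x := by
  rw [scomp.eq_def]
  split
  · rfl
  · exact absurd rfl (h2 _ _)
  all_goals simp_all

lemma scomp_r_right' : ∀ {b : Bool} {x : NTr}, NF b x → scomp x .r = x := by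
  intro b x h
  induction h with
  | cons he hx hxr hmg ihe ihx =>
      simp only [scomp]
      rw [ihx, scomp_nomerge he.ne_r he.ne_t hxr hmg]
  | r => rfl
  | single he ih => exact ih
  | lam h1 h2 ih => exact scomp_elem_r (by simp)
  | ap h1 h2 h3 ih1 ih2 => exact scomp_elem_r (by simp)
  | lets h1 h2 h3 ih1 ih2 => exact scomp_elem_r (by simp)
  | tb h1 h2 ih => exact scomp_elem_r (by simp)
  | pb => exact scomp_elem_r (by simp)
  | pbb => exact scomp_elem_r (by simp)
  | ti => exact scomp_elem_r (by simp)

/-- scomp with .r on the right is the identity on normal trails. -/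
lemma scomp_r_right {x : NTr} (hx : NQ x) : scomp x .r = x := scomp_r_right' hx

end CAU
namespace CAU

lemma not_Mg_of_hd {e h : NTr} (hne : hd e ≠ hd h) : ¬ Mg e h := fun m => hne m.2

lemma slam_of_ne {q : NTr} (h : q ≠ .r) : slam q = .lam q := if_neg h
lemma slam_r : slam .r = .r := rfl
lemma tcons_of_ne {m : NTr} (c : NTr) (h : m ≠ .r) : tcons m c = .t m c := if_neg h
lemma tcons_r (c : NTr) : tcons .r c = c := rfl
lemma sap_of_ne {a b : NTr} (h : ¬(a = .r ∧ b = .r)) : sap a b = .ap a b := if_neg h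
lemma slets_of_ne {a b : NTr} (h : ¬(a = .r ∧ b = .r)) : slets a b = .lets a b := if_neg h
lemma stb_of_ne {ζ : Fin 9 → NTr} (h : ¬∀ i, ζ i = .r) : stb ζ = .tb ζ := if_neg h

lemma lam_key {a b : NTr} (ha : NQ a) (hb : NQ b) (har : a ≠ .r) (hbr : b ≠ .r)
    (IH : ∀ y z, NQ y → NQ z → scomp (scomp a y) z = scomp a (scomp y z)) :
    ∀ Z, NQ Z → scomp (.lam (scomp a b)) Z = scomp (.lam a) (scomp (.lam b) Z) := by
  have hab : scomp a b ≠ .r := scomp_ne_r ha hb (fun u => har u.1)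
  intro Z hZ
  cases Z with
  | r =>
      rw [scomp_elem_r (x := .lam b) (by simp), scomp_elem_r (x := .lam (scomp a b)) (by simp)]
      simp only [scomp]
      rw [slam_of_ne hab]
  | lam c =>
      obtain ⟨hc, hcr⟩ := hZ.inv_lam
      have hbc : scomp b c ≠ .r := scomp_ne_r hb hc (fun u => hbr u.1)
      simp only [scomp]
      rw [IH b c hb hc, slam_of_ne hbc]
      simp only [scomp]
  | t h c =>
      obtain ⟨heh, hc, hcr, hmg⟩ := hZ.inv_t
      cases heh with
      | @lam d hd1 hd2 =>
          have hbd : scomp b d ≠ .r := scomp_ne_r hb hd1 (fun u => hbr u.1)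
          simp only [scomp]
          rw [IH b d hb hd1, slam_of_ne hbd, tcons_of_ne (m := NTr.lam (scomp b d)) _ (by simp)]
          simp only [scomp]
      | _ =>
          rw [scomp_nomerge (x := .lam b) (by simp) (by simp) (by simp)
                (not_Mg_of_hd (by norm_num [hd, headQ])),
              scomp_nomerge (x := .lam (scomp a b)) (by simp) (by simp) (by simp)
                (not_Mg_of_hd (by norm_num [hd, headQ]))]
          simp only [scomp]
          rw [slam_of_ne hab, tcons_of_ne (m := NTr.lam (scomp a b)) _ (by simp)]
  | _ =>
      rw [scomp_nomerge (x := .lam b) (by simp) (by simp) (by simp)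
            (not_Mg_of_hd (by norm_num [hd, headQ])),
          scomp_nomerge (x := .lam (scomp a b)) (by simp) (by simp) (by simp)
            (not_Mg_of_hd (by norm_num [hd, headQ]))]
      simp only [scomp]
      rw [slam_of_ne hab, tcons_of_ne (m := NTr.lam (scomp a b)) _ (by simp)]

end CAU
namespace CAU

lemma ap_key {a b a' b' : NTr} (ha : NQ a) (hb : NQ b) (ha' : NQ a') (hb' : NQ b')
    (hr : ¬(a = .r ∧ b = .r)) (hr' : ¬(a' = .r ∧ b' = .r))
    (IHa : ∀ y z, NQ y → NQ z → scomp (scomp a y) z = scomp a (scomp y z))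
    (IHb : ∀ y z, NQ y → NQ z → scomp (scomp b y) z = scomp b (scomp y z)) :
    ∀ Z, NQ Z → scomp (.ap (scomp a a') (scomp b b')) Z
      = scomp (.ap a b) (scomp (.ap a' b') Z) := by
  have hne : ¬(scomp a a' = .r ∧ scomp b b' = .r) := by
    rintro ⟨u, v⟩
    exact hr ⟨((scomp_spec _ _ ha ha').2 u).1, ((scomp_spec _ _ hb hb').2 v).1⟩
  intro Z hZ
  cases Z with
  | r =>
      rw [scomp_elem_r (x := .ap a' b') (by simp),
          scomp_elem_r (x := .ap (scomp a a') (scomp b b')) (by simp)]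
      simp only [scomp]
      rw [sap_of_ne hne]
  | ap c d =>
      obtain ⟨hc, hd, hrz⟩ := hZ.inv_ap
      have hne2 : ¬(scomp a' c = .r ∧ scomp b' d = .r) := by
        rintro ⟨u, v⟩
        exact hr' ⟨((scomp_spec _ _ ha' hc).2 u).1, ((scomp_spec _ _ hb' hd).2 v).1⟩
      simp only [scomp]
      rw [IHa a' c ha' hc, IHb b' d hb' hd, sap_of_ne hne2]
      simp only [scomp]
  | t h c =>
      obtain ⟨heh, hc, hcr, hmg⟩ := hZ.inv_t
      cases heh with
      | @ap u v hu hv hruv =>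
          have hne2 : ¬(scomp a' u = .r ∧ scomp b' v = .r) := by
            rintro ⟨p, q⟩
            exact hr' ⟨((scomp_spec _ _ ha' hu).2 p).1, ((scomp_spec _ _ hb' hv).2 q).1⟩
          simp only [scomp]
          rw [IHa a' u ha' hu, IHb b' v hb' hv, sap_of_ne hne2,
              tcons_of_ne (m := NTr.ap (scomp a' u) (scomp b' v)) _ (by simp)]
          simp only [scomp]
      | _ =>
          rw [scomp_nomerge (x := .ap a' b') (by simp) (by simp) (by simp)
                (not_Mg_of_hd (by norm_num [hd, headQ])),
              scomp_nomerge (x := .ap (scomp a a') (scomp b b')) (by simp) (by simp) (by simp)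
                (not_Mg_of_hd (by norm_num [hd, headQ]))]
          simp only [scomp]
          rw [sap_of_ne hne, tcons_of_ne (m := NTr.ap (scomp a a') (scomp b b')) _ (by simp)]
  | _ =>
      rw [scomp_nomerge (x := .ap a' b') (by simp) (by simp) (by simp)
            (not_Mg_of_hd (by norm_num [hd, headQ])),
          scomp_nomerge (x := .ap (scomp a a') (scomp b b')) (by simp) (by simp) (by simp)
            (not_Mg_of_hd (by norm_num [hd, headQ]))]
      simp only [scomp]
      rw [sap_of_ne hne, tcons_of_ne (m := NTr.ap (scomp a a') (scomp b b')) _ (by simp)]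

lemma lets_key {a b a' b' : NTr} (ha : NQ a) (hb : NQ b) (ha' : NQ a') (hb' : NQ b')
    (hr : ¬(a = .r ∧ b = .r)) (hr' : ¬(a' = .r ∧ b' = .r))
    (IHa : ∀ y z, NQ y → NQ z → scomp (scomp a y) z = scomp a (scomp y z))
    (IHb : ∀ y z, NQ y → NQ z → scomp (scomp b y) z = scomp b (scomp y z)) :
    ∀ Z, NQ Z → scomp (.lets (scomp a a') (scomp b b')) Z
      = scomp (.lets a b) (scomp (.lets a' b') Z) := by
  have hne : ¬(scomp a a' = .r ∧ scomp b b' = .r) := by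
    rintro ⟨u, v⟩
    exact hr ⟨((scomp_spec _ _ ha ha').2 u).1, ((scomp_spec _ _ hb hb').2 v).1⟩
  intro Z hZ
  cases Z with
  | r =>
      rw [scomp_elem_r (x := .lets a' b') (by simp),
          scomp_elem_r (x := .lets (scomp a a') (scomp b b')) (by simp)]
      simp only [scomp]
      rw [slets_of_ne hne]
  | lets c d =>
      obtain ⟨hc, hd, hrz⟩ := hZ.inv_lets
      have hne2 : ¬(scomp a' c = .r ∧ scomp b' d = .r) := by
        rintro ⟨u, v⟩
        exact hr' ⟨((scomp_spec _ _ ha' hc).2 u).1, ((scomp_spec _ _ hb' hd).2 v).1⟩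
      simp only [scomp]
      rw [IHa a' c ha' hc, IHb b' d hb' hd, slets_of_ne hne2]
      simp only [scomp]
  | t h c =>
      obtain ⟨heh, hc, hcr, hmg⟩ := hZ.inv_t
      cases heh with
      | @lets u v hu hv hruv =>
          have hne2 : ¬(scomp a' u = .r ∧ scomp b' v = .r) := by
            rintro ⟨p, q⟩
            exact hr' ⟨((scomp_spec _ _ ha' hu).2 p).1, ((scomp_spec _ _ hb' hv).2 q).1⟩
          simp only [scomp]
          rw [IHa a' u ha' hu, IHb b' v hb' hv, slets_of_ne hne2,
              tcons_of_ne (m := NTr.lets (scomp a' u) (scomp b' v)) _ (by simp)]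
          simp only [scomp]
      | _ =>
          rw [scomp_nomerge (x := .lets a' b') (by simp) (by simp) (by simp)
                (not_Mg_of_hd (by norm_num [hd, headQ])),
              scomp_nomerge (x := .lets (scomp a a') (scomp b b')) (by simp) (by simp) (by simp)
                (not_Mg_of_hd (by norm_num [hd, headQ]))]
          simp only [scomp]
          rw [slets_of_ne hne, tcons_of_ne (m := NTr.lets (scomp a a') (scomp b b')) _ (by simp)]
  | _ =>
      rw [scomp_nomerge (x := .lets a' b') (by simp) (by simp) (by simp)
            (not_Mg_of_hd (by norm_num [hd, headQ])),
          scomp_nomerge (x := .lets (scomp a a') (scomp b b')) (by simp) (by simp) (by simp)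
            (not_Mg_of_hd (by norm_num [hd, headQ]))]
      simp only [scomp]
      rw [slets_of_ne hne, tcons_of_ne (m := NTr.lets (scomp a a') (scomp b b')) _ (by simp)]

lemma tb_key {ζ ζ' : Fin 9 → NTr} (hζ : ∀ i, NQ (ζ i)) (hζ' : ∀ i, NQ (ζ' i))
    (hr : ¬∀ i, ζ i = .r) (hr' : ¬∀ i, ζ' i = .r)
    (IH : ∀ i, ∀ y z, NQ y → NQ z → scomp (scomp (ζ i) y) z = scomp (ζ i) (scomp y z)) :
    ∀ Z, NQ Z → scomp (.tb fun i => scomp (ζ i) (ζ' i)) Z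
      = scomp (.tb ζ) (scomp (.tb ζ') Z) := by
  have hne : ¬∀ i, scomp (ζ i) (ζ' i) = .r := by
    intro hh
    exact hr (fun i => ((scomp_spec _ _ (hζ i) (hζ' i)).2 (hh i)).1)
  intro Z hZ
  cases Z with
  | r =>
      rw [scomp_elem_r (x := .tb ζ') (by simp),
          scomp_elem_r (x := .tb fun i => scomp (ζ i) (ζ' i)) (by simp)]
      simp only [scomp]
      rw [stb_of_ne hne]
  | tb ξ =>
      obtain ⟨hξ, hrξ⟩ := hZ.inv_tb
      have hne2 : ¬∀ i, scomp (ζ' i) (ξ i) = .r := by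
        intro hh
        exact hr' (fun i => ((scomp_spec _ _ (hζ' i) (hξ i)).2 (hh i)).1)
      simp only [scomp]
      rw [show (fun i => scomp (scomp (ζ i) (ζ' i)) (ξ i))
            = fun i => scomp (ζ i) (scomp (ζ' i) (ξ i)) from
          funext fun i => IH i _ _ (hζ' i) (hξ i), stb_of_ne hne2]
      simp only [scomp]
  | t h c =>
      obtain ⟨heh, hc, hcr, hmg⟩ := hZ.inv_t
      cases heh with
      | @tb ξ hξ hrξ =>
          have hne2 : ¬∀ i, scomp (ζ' i) (ξ i) = .r := by
            intro hh
            exact hr' (fun i => ((scomp_spec _ _ (hζ' i) (hξ i)).2 (hh i)).1)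
          simp only [scomp]
          rw [show (fun i => scomp (scomp (ζ i) (ζ' i)) (ξ i))
                = fun i => scomp (ζ i) (scomp (ζ' i) (ξ i)) from
              funext fun i => IH i _ _ (hζ' i) (hξ i), stb_of_ne hne2,
              tcons_of_ne (m := NTr.tb fun i => scomp (ζ' i) (ξ i)) _ (by simp)]
          simp only [scomp]
      | _ =>
          rw [scomp_nomerge (x := .tb ζ') (by simp) (by simp) (by simp)
                (not_Mg_of_hd (by norm_num [hd, headQ])),
              scomp_nomerge (x := .tb fun i => scomp (ζ i) (ζ' i)) (by simp) (by simp) (by simp)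
                (not_Mg_of_hd (by norm_num [hd, headQ]))]
          simp only [scomp]
          rw [stb_of_ne hne, tcons_of_ne (m := NTr.tb fun i => scomp (ζ i) (ζ' i)) _ (by simp)]
  | _ =>
      rw [scomp_nomerge (x := .tb ζ') (by simp) (by simp) (by simp)
            (not_Mg_of_hd (by norm_num [hd, headQ])),
          scomp_nomerge (x := .tb fun i => scomp (ζ i) (ζ' i)) (by simp) (by simp) (by simp)
            (not_Mg_of_hd (by norm_num [hd, headQ]))]
      simp only [scomp]
      rw [stb_of_ne hne, tcons_of_ne (m := NTr.tb fun i => scomp (ζ i) (ζ' i)) _ (by simp)]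

end CAU
namespace CAU

theorem scomp_assoc : ∀ (x y z : NTr), NQ x → NQ y → NQ z →
    scomp (scomp x y) z = scomp x (scomp y z) := by
  intro x
  induction x with
  | r => intro y z _ _ _; simp only [scomp]
  | t a b iha ihb =>
      intro y z hx hy hz
      obtain ⟨hea, hb, hbr, hmg⟩ := hx.inv_t
      have ha := NF.single hea
      simp only [scomp]
      rw [iha (scomp b y) z ha (NQ_scomp hb hy) hz, ihb y z hb hy hz]
  | lam a iha =>
      intro y z hx hy hz
      obtain ⟨ha, har⟩ := hx.inv_lam
      have IH' : ∀ y z, NQ y → NQ z → scomp (scomp a y) z = scomp a (scomp y z) :=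
        fun y z hy hz => iha y z ha hy hz
      cases y with
      | r => rw [scomp_elem_r (x := .lam a) (by simp)]; simp only [scomp]
      | lam b =>
          obtain ⟨hb, hbr⟩ := hy.inv_lam
          simp only [scomp]
          rw [slam_of_ne (scomp_ne_r ha hb (fun u => har u.1))]
          exact lam_key ha hb har hbr IH' z hz
      | t h c =>
          obtain ⟨heh, hc, hcr, hmg⟩ := hy.inv_t
          cases heh with
          | @lam d hd1 hd2 =>
              have had : scomp a d ≠ .r := scomp_ne_r ha hd1 (fun u => har u.1)
              simp only [scomp]
              rw [slam_of_ne had, tcons_of_ne (m := NTr.lam (scomp a d)) _ (by simp)]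
              simp only [scomp]
              exact lam_key ha hd1 har hd2 IH' (scomp c z) (NQ_scomp hc hz)
          | _ =>
              rw [scomp_nomerge (x := .lam a) (by simp) (by simp) (by simp)
                    (not_Mg_of_hd (by norm_num [hd, headQ]))]
              simp only [scomp]
      | _ =>
          rw [scomp_nomerge (x := .lam a) (by simp) (by simp) (by simp)
                (not_Mg_of_hd (by norm_num [hd, headQ]))]
          simp only [scomp]
  | ap a b iha ihb =>
      intro y z hx hy hz
      obtain ⟨ha, hb, hr⟩ := hx.inv_ap
      have IHa : ∀ y z, NQ y → NQ z → scomp (scomp a y) z = scomp a (scomp y z) :=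
        fun y z hy hz => iha y z ha hy hz
      have IHb : ∀ y z, NQ y → NQ z → scomp (scomp b y) z = scomp b (scomp y z) :=
        fun y z hy hz => ihb y z hb hy hz
      cases y with
      | r => rw [scomp_elem_r (x := .ap a b) (by simp)]; simp only [scomp]
      | ap a' b' =>
          obtain ⟨ha', hb', hr'⟩ := hy.inv_ap
          have hne : ¬(scomp a a' = .r ∧ scomp b b' = .r) := by
            rintro ⟨u, v⟩
            exact hr ⟨((scomp_spec _ _ ha ha').2 u).1, ((scomp_spec _ _ hb hb').2 v).1⟩
          simp only [scomp]
          rw [sap_of_ne hne]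
          exact ap_key ha hb ha' hb' hr hr' IHa IHb z hz
      | t h c =>
          obtain ⟨heh, hc, hcr, hmg⟩ := hy.inv_t
          cases heh with
          | @ap a' b' ha' hb' hr' =>
              have hne : ¬(scomp a a' = .r ∧ scomp b b' = .r) := by
                rintro ⟨u, v⟩
                exact hr ⟨((scomp_spec _ _ ha ha').2 u).1, ((scomp_spec _ _ hb hb').2 v).1⟩
              simp only [scomp]
              rw [sap_of_ne hne, tcons_of_ne (m := NTr.ap (scomp a a') (scomp b b')) _ (by simp)]
              simp only [scomp]
              exact ap_key ha hb ha' hb' hr hr' IHa IHb (scomp c z) (NQ_scomp hc hz)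
          | _ =>
              rw [scomp_nomerge (x := .ap a b) (by simp) (by simp) (by simp)
                    (not_Mg_of_hd (by norm_num [hd, headQ]))]
              simp only [scomp]
      | _ =>
          rw [scomp_nomerge (x := .ap a b) (by simp) (by simp) (by simp)
                (not_Mg_of_hd (by norm_num [hd, headQ]))]
          simp only [scomp]
  | lets a b iha ihb =>
      intro y z hx hy hz
      obtain ⟨ha, hb, hr⟩ := hx.inv_lets
      have IHa : ∀ y z, NQ y → NQ z → scomp (scomp a y) z = scomp a (scomp y z) :=
        fun y z hy hz => iha y z ha hy hz
      have IHb : ∀ y z, NQ y → NQ z → scomp (scomp b y) z = scomp b (scomp y z) :=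
        fun y z hy hz => ihb y z hb hy hz
      cases y with
      | r => rw [scomp_elem_r (x := .lets a b) (by simp)]; simp only [scomp]
      | lets a' b' =>
          obtain ⟨ha', hb', hr'⟩ := hy.inv_lets
          have hne : ¬(scomp a a' = .r ∧ scomp b b' = .r) := by
            rintro ⟨u, v⟩
            exact hr ⟨((scomp_spec _ _ ha ha').2 u).1, ((scomp_spec _ _ hb hb').2 v).1⟩
          simp only [scomp]
          rw [slets_of_ne hne]
          exact lets_key ha hb ha' hb' hr hr' IHa IHb z hz
      | t h c =>
          obtain ⟨heh, hc, hcr, hmg⟩ := hy.inv_t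
          cases heh with
          | @lets a' b' ha' hb' hr' =>
              have hne : ¬(scomp a a' = .r ∧ scomp b b' = .r) := by
                rintro ⟨u, v⟩
                exact hr ⟨((scomp_spec _ _ ha ha').2 u).1, ((scomp_spec _ _ hb hb').2 v).1⟩
              simp only [scomp]
              rw [slets_of_ne hne,
                  tcons_of_ne (m := NTr.lets (scomp a a') (scomp b b')) _ (by simp)]
              simp only [scomp]
              exact lets_key ha hb ha' hb' hr hr' IHa IHb (scomp c z) (NQ_scomp hc hz)
          | _ =>
              rw [scomp_nomerge (x := .lets a b) (by simp) (by simp) (by simp)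
                    (not_Mg_of_hd (by norm_num [hd, headQ]))]
              simp only [scomp]
      | _ =>
          rw [scomp_nomerge (x := .lets a b) (by simp) (by simp) (by simp)
                (not_Mg_of_hd (by norm_num [hd, headQ]))]
          simp only [scomp]
  | tb ζ ihζ =>
      intro y z hx hy hz
      obtain ⟨hζ, hr⟩ := hx.inv_tb
      have IH : ∀ i, ∀ y z, NQ y → NQ z →
          scomp (scomp (ζ i) y) z = scomp (ζ i) (scomp y z) :=
        fun i y z hy hz => ihζ i y z (hζ i) hy hz
      cases y with
      | r => rw [scomp_elem_r (x := .tb ζ) (by simp)]; simp only [scomp]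
      | tb ζ' =>
          obtain ⟨hζ', hr'⟩ := hy.inv_tb
          have hne : ¬∀ i, scomp (ζ i) (ζ' i) = .r := by
            intro hh
            exact hr (fun i => ((scomp_spec _ _ (hζ i) (hζ' i)).2 (hh i)).1)
          simp only [scomp]
          rw [stb_of_ne hne]
          exact tb_key hζ hζ' hr hr' IH z hz
      | t h c =>
          obtain ⟨heh, hc, hcr, hmg⟩ := hy.inv_t
          cases heh with
          | @tb ζ' hζ' hr' =>
              have hne : ¬∀ i, scomp (ζ i) (ζ' i) = .r := by
                intro hh
                exact hr (fun i => ((scomp_spec _ _ (hζ i) (hζ' i)).2 (hh i)).1)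
              simp only [scomp]
              rw [stb_of_ne hne,
                  tcons_of_ne (m := NTr.tb fun i => scomp (ζ i) (ζ' i)) _ (by simp)]
              simp only [scomp]
              exact tb_key hζ hζ' hr hr' IH (scomp c z) (NQ_scomp hc hz)
          | _ =>
              rw [scomp_nomerge (x := .tb ζ) (by simp) (by simp) (by simp)
                    (not_Mg_of_hd (by norm_num [hd, headQ]))]
              simp only [scomp]
      | _ =>
          rw [scomp_nomerge (x := .tb ζ) (by simp) (by simp) (by simp)
                (not_Mg_of_hd (by norm_num [hd, headQ]))]
          simp only [scomp]
  | pb =>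
      intro y z _ hy hz
      by_cases hyr : y = .r
      · subst hyr; rw [scomp_elem_r (x := .pb) (by simp)]; simp only [scomp]
      · rw [scomp_nomerge (x := .pb) (by simp) (by simp) hyr (fun m => m.1 rfl)]
        simp only [scomp]
  | pbb =>
      intro y z _ hy hz
      by_cases hyr : y = .r
      · subst hyr; rw [scomp_elem_r (x := .pbb) (by simp)]; simp only [scomp]
      · rw [scomp_nomerge (x := .pbb) (by simp) (by simp) hyr (fun m => m.1 rfl)]
        simp only [scomp]
  | ti =>
      intro y z _ hy hz
      by_cases hyr : y = .r
      · subst hyr; rw [scomp_elem_r (x := .ti) (by simp)]; simp only [scomp]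
      · rw [scomp_nomerge (x := .ti) (by simp) (by simp) hyr (fun m => m.1 rfl)]
        simp only [scomp]

end CAU
namespace CAU

lemma scomp_slam_slam {a b : NTr} (ha : NQ a) (hb : NQ b) :
    scomp (slam a) (slam b) = slam (scomp a b) := by
  by_cases har : a = .r
  · subst har; rw [slam_r]; simp only [scomp]
  · by_cases hbr : b = .r
    · subst hbr
      rw [slam_r, slam_of_ne har, scomp_elem_r (x := .lam a) (by simp),
          scomp_r_right ha, slam_of_ne har]
    · rw [slam_of_ne har, slam_of_ne hbr]
      simp only [scomp]

lemma scomp_sap_sap {a b a' b' : NTr} (ha : NQ a) (hb : NQ b) (ha' : NQ a') (hb' : NQ b') :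
    scomp (sap a b) (sap a' b') = sap (scomp a a') (scomp b b') := by
  by_cases hr : a = .r ∧ b = .r
  · obtain ⟨u, v⟩ := hr; subst u; subst v
    rw [show sap .r .r = .r from rfl]
    simp only [scomp]
  · by_cases hr' : a' = .r ∧ b' = .r
    · obtain ⟨u, v⟩ := hr'; subst u; subst v
      rw [show sap .r .r = .r from rfl, sap_of_ne hr, scomp_elem_r (x := .ap a b) (by simp),
          scomp_r_right ha, scomp_r_right hb, sap_of_ne hr]
    · rw [sap_of_ne hr, sap_of_ne hr']
      simp only [scomp]

lemma scomp_slets_slets {a b a' b' : NTr} (ha : NQ a) (hb : NQ b) (ha' : NQ a') (hb' : NQ b') :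
    scomp (slets a b) (slets a' b') = slets (scomp a a') (scomp b b') := by
  by_cases hr : a = .r ∧ b = .r
  · obtain ⟨u, v⟩ := hr; subst u; subst v
    rw [show slets .r .r = .r from rfl]
    simp only [scomp]
  · by_cases hr' : a' = .r ∧ b' = .r
    · obtain ⟨u, v⟩ := hr'; subst u; subst v
      rw [show slets .r .r = .r from rfl, slets_of_ne hr, scomp_elem_r (x := .lets a b) (by simp),
          scomp_r_right ha, scomp_r_right hb, slets_of_ne hr]
    · rw [slets_of_ne hr, slets_of_ne hr']
      simp only [scomp]

lemma scomp_stb_stb {ζ ζ' : Fin 9 → NTr} (hζ : ∀ i, NQ (ζ i)) (hζ' : ∀ i, NQ (ζ' i)) :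
    scomp (stb ζ) (stb ζ') = stb (fun i => scomp (ζ i) (ζ' i)) := by
  by_cases hr : ∀ i, ζ i = .r
  · rw [show stb ζ = .r from if_pos hr]
    simp only [scomp]
    congr 1
    funext i
    rw [hr i]
    simp only [scomp]
  · by_cases hr' : ∀ i, ζ' i = .r
    · rw [show stb ζ' = .r from if_pos hr', stb_of_ne hr,
          scomp_elem_r (x := .tb ζ) (by simp)]
      have : (fun i => scomp (ζ i) (ζ' i)) = ζ := by
        funext i
        rw [hr' i, scomp_r_right (hζ i)]
      rw [this, stb_of_ne hr]
    · rw [stb_of_ne hr, stb_of_ne hr']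
      simp only [scomp]

/-- Normal form function for trails. -/
def nfq : NTr → NTr
  | .r => .r
  | .pb => .pb
  | .pbb => .pbb
  | .ti => .ti
  | .t a b => scomp (nfq a) (nfq b)
  | .lam a => slam (nfq a)
  | .ap a b => sap (nfq a) (nfq b)
  | .lets a b => slets (nfq a) (nfq b)
  | .tb ζ => stb (fun i => nfq (ζ i))

lemma NQ_nfq (q : NTr) : NQ (nfq q) := by
  induction q with
  | r => exact NF.r
  | pb => exact NF.single NF.pb
  | pbb => exact NF.single NF.pbb
  | ti => exact NF.single NF.ti
  | t a b iha ihb => exact NQ_scomp iha ihb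
  | lam a ih => exact NQ_slam ih
  | ap a b iha ihb => exact NQ_sap iha ihb
  | lets a b iha ihb => exact NQ_slets iha ihb
  | tb ζ ih => exact NQ_stb ih

/-- The normal form is invariant under permutation steps. -/
theorem nfq_step {q q' : NTr} (h : TStepQ q q') : nfq q = nfq q' := by
  induction h with
  | tReflR q => simp only [nfq]; exact scomp_r_right (NQ_nfq q)
  | tReflL q => simp only [nfq, scomp]
  | tbRefl => simp [nfq, stb]
  | apRefl => simp [nfq, sap]
  | lamRefl => simp [nfq, slam]
  | letsRefl => simp [nfq, slets]
  | tAssoc q₁ q₂ q₃ =>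
      simp only [nfq]
      exact scomp_assoc _ _ _ (NQ_nfq _) (NQ_nfq _) (NQ_nfq _)
  | tLam q q' =>
      simp only [nfq]
      exact scomp_slam_slam (NQ_nfq q) (NQ_nfq q')
  | tLamT q₁ q₁' q =>
      simp only [nfq]
      rw [← scomp_slam_slam (NQ_nfq q₁) (NQ_nfq q₁'),
          scomp_assoc _ _ _ (NQ_slam (NQ_nfq q₁)) (NQ_slam (NQ_nfq q₁')) (NQ_nfq q)]
  | tAp q₁ q₂ q₁' q₂' =>
      simp only [nfq]
      exact scomp_sap_sap (NQ_nfq q₁) (NQ_nfq q₂) (NQ_nfq q₁') (NQ_nfq q₂')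
  | tApT q₁ q₂ q₁' q₂' q =>
      simp only [nfq]
      rw [← scomp_sap_sap (NQ_nfq q₁) (NQ_nfq q₂) (NQ_nfq q₁') (NQ_nfq q₂'),
          scomp_assoc _ _ _ (NQ_sap (NQ_nfq q₁) (NQ_nfq q₂))
            (NQ_sap (NQ_nfq q₁') (NQ_nfq q₂')) (NQ_nfq q)]
  | tLets q₁ q₂ q₁' q₂' =>
      simp only [nfq]
      exact scomp_slets_slets (NQ_nfq q₁) (NQ_nfq q₂) (NQ_nfq q₁') (NQ_nfq q₂')
  | tLetsT q₁ q₂ q₁' q₂' q =>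
      simp only [nfq]
      rw [← scomp_slets_slets (NQ_nfq q₁) (NQ_nfq q₂) (NQ_nfq q₁') (NQ_nfq q₂'),
          scomp_assoc _ _ _ (NQ_slets (NQ_nfq q₁) (NQ_nfq q₂))
            (NQ_slets (NQ_nfq q₁') (NQ_nfq q₂')) (NQ_nfq q)]
  | tTb ζ₁ ζ₂ =>
      simp only [nfq]
      exact scomp_stb_stb (fun i => NQ_nfq _) (fun i => NQ_nfq _)
  | tTbT ζ₁ ζ₂ q =>
      simp only [nfq]
      rw [← scomp_stb_stb (fun i => NQ_nfq (ζ₁ i)) (fun i => NQ_nfq (ζ₂ i)),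
          scomp_assoc _ _ _ (NQ_stb (fun i => NQ_nfq _)) (NQ_stb (fun i => NQ_nfq _)) (NQ_nfq q)]
  | tL q' h ih => simp only [nfq]; rw [ih]
  | tR q h ih => simp only [nfq]; rw [ih]
  | lamC h ih => simp only [nfq]; rw [ih]
  | apL q' h ih => simp only [nfq]; rw [ih]
  | apR q h ih => simp only [nfq]; rw [ih]
  | letsL q' h ih => simp only [nfq]; rw [ih]
  | letsR q h ih => simp only [nfq]; rw [ih]
  | @tbC ζ i q2 h ih =>
      simp only [nfq]
      congr 1
      funext j
      by_cases hj : j = i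
      · subst hj; rw [Function.update_self, ih]
      · rw [Function.update_of_ne hj]

end CAU
namespace CAU

lemma nfq_of_NF : ∀ {b : Bool} {x : NTr}, NF b x → nfq x = x := by
  intro b x h
  induction h with
  | r => rfl
  | pb => rfl
  | pbb => rfl
  | ti => rfl
  | lam h1 h2 ih => simp only [nfq]; rw [ih, slam_of_ne h2]
  | ap h1 h2 h3 ih1 ih2 => simp only [nfq]; rw [ih1, ih2, sap_of_ne h3]
  | lets h1 h2 h3 ih1 ih2 => simp only [nfq]; rw [ih1, ih2, slets_of_ne h3]
  | @tb ζ h1 h2 ih =>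
      simp only [nfq]
      rw [show (fun i => nfq (ζ i)) = ζ from funext ih, stb_of_ne h2]
  | single he ih => exact ih
  | cons he hx hxr hmg ihe ihx =>
      simp only [nfq]
      rw [ihe, ihx, scomp_nomerge he.ne_r he.ne_t hxr hmg]

lemma NQ_of_normal : ∀ q : NTr, (∀ q', ¬ TStepQ q q') → NQ q := by
  intro q
  induction q with
  | r => intro _; exact NF.r
  | pb => intro _; exact NF.single NF.pb
  | pbb => intro _; exact NF.single NF.pbb
  | ti => intro _; exact NF.single NF.ti
  | lam a ih =>
      intro h
      have ha : NQ a := ih (fun q' st => h _ (TStepQ.lamC st))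
      have har : a ≠ .r := by
        intro e; subst e; exact h _ (TStepQ.lamRefl)
      exact NF.single (NF.lam ha har)
  | ap a b iha ihb =>
      intro h
      have ha : NQ a := iha (fun q' st => h _ (TStepQ.apL _ st))
      have hb : NQ b := ihb (fun q' st => h _ (TStepQ.apR _ st))
      refine NF.single (NF.ap ha hb ?_)
      rintro ⟨u, v⟩; subst u; subst v
      exact h _ TStepQ.apRefl
  | lets a b iha ihb =>
      intro h
      have ha : NQ a := iha (fun q' st => h _ (TStepQ.letsL _ st))
      have hb : NQ b := ihb (fun q' st => h _ (TStepQ.letsR _ st))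
      refine NF.single (NF.lets ha hb ?_)
      rintro ⟨u, v⟩; subst u; subst v
      exact h _ TStepQ.letsRefl
  | tb ζ ih =>
      intro h
      have hζ : ∀ i, NQ (ζ i) := fun i => ih i (fun q' st => h _ (TStepQ.tbC i st))
      refine NF.single (NF.tb hζ ?_)
      intro hall
      have he : ζ = fun _ => .r := funext hall
      rw [he] at h
      exact h _ TStepQ.tbRefl
  | t a b iha ihb =>
      intro h
      have ha : NQ a := iha (fun q' st => h _ (TStepQ.tL _ st))
      have hb : NQ b := ihb (fun q' st => h _ (TStepQ.tR _ st))
      have hbr : b ≠ .r := by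
        intro e; subst e; exact h _ (TStepQ.tReflR a)
      have har : a ≠ .r := by
        intro e; subst e; exact h _ (TStepQ.tReflL b)
      have hat : ∀ u v, a ≠ .t u v := by
        intro u v e; subst e; exact h _ (TStepQ.tAssoc u v b)
      refine NF.cons (NF.of_NQ ha har hat) hb hbr ?_
      apply not_Mg_of_nomatch
      · intro u v e1 e2; subst e1; subst e2; exact h _ (TStepQ.tLam u v)
      · intro u v c e1 e2; subst e1; subst e2; exact h _ (TStepQ.tLamT u v c)
      · intro u v u' v' e1 e2; subst e1; subst e2; exact h _ (TStepQ.tAp u v u' v')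
      · intro u v u' v' c e1 e2; subst e1; subst e2; exact h _ (TStepQ.tApT u v u' v' c)
      · intro u v u' v' e1 e2; subst e1; subst e2; exact h _ (TStepQ.tLets u v u' v')
      · intro u v u' v' c e1 e2; subst e1; subst e2; exact h _ (TStepQ.tLetsT u v u' v' c)
      · intro ζ ζ' e1 e2; subst e1; subst e2; exact h _ (TStepQ.tTb ζ ζ')
      · intro ζ ζ' c e1 e2; subst e1; subst e2; exact h _ (TStepQ.tTbT ζ ζ' c)

/-- Every trail reduces to its normal form. -/
theorem nfq_reach (q : NTr) : Relation.ReflTransGen TStepQ q (nfq q) := by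
  induction q using WellFounded.induction snQ with
  | _ q ih =>
    by_cases hn : ∀ q', ¬ TStepQ q q'
    · rw [nfq_of_NF (NQ_of_normal q hn)]
    · push_neg at hn
      obtain ⟨q', st⟩ := hn
      rw [nfq_step st]
      exact Relation.ReflTransGen.head st (ih q' st)

theorem nfq_star {q q' : NTr} (h : Relation.ReflTransGen TStepQ q q') : nfq q = nfq q' := by
  induction h with
  | refl => rfl
  | @tail b c hab hbc ih => rw [ih, nfq_step hbc]
  
theorem confluenceQ (q q₁ q₂ : NTr) (h1 : Relation.ReflTransGen TStepQ q q₁)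
    (h2 : Relation.ReflTransGen TStepQ q q₂) :
    ∃ q₃, Relation.ReflTransGen TStepQ q₁ q₃ ∧ Relation.ReflTransGen TStepQ q₂ q₃ := by
  refine ⟨nfq q, ?_, ?_⟩
  · rw [nfq_star h1]; exact nfq_reach q₁
  · rw [nfq_star h2]; exact nfq_reach q₂

end CAU
namespace CAU

def sann (q : NTr) (d : NTm) : NTm := if q = .r then d else .ann q d

/-- Extraction of the top-level trail of a term. -/
def extT : NTm → NTr
  | .var _ => .r
  | .lam M => slam (extT M)
  | .ap M N => sap (extT M) (extT N)
  | .lets M N => slets (extT M) (extT N)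
  | .bang _ _ => .r
  | .ann q M => scomp (nfq q) (extT M)
  | .insp ϑ => stb (fun i => extT (ϑ i))

/-- Erasure of annotations (normalizing the trails of bangs). -/
def erT : NTm → NTm
  | .var n => .var n
  | .lam M => .lam (erT M)
  | .ap M N => .ap (erT M) (erT N)
  | .lets M N => .lets (erT M) (erT N)
  | .bang q M => .bang (scomp (nfq q) (extT M)) (erT M)
  | .ann _ M => erT M
  | .insp ϑ => .insp (fun i => erT (ϑ i))

/-- Normal form function for terms. -/
def nft (M : NTm) : NTm := sann (extT M) (erT M)

lemma NQ_extT (M : NTm) : NQ (extT M) := by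
  induction M with
  | var n => exact NF.r
  | lam M ih => exact NQ_slam ih
  | ap M N ihM ihN => exact NQ_sap ihM ihN
  | lets M N ihM ihN => exact NQ_slets ihM ihN
  | bang q M ih => exact NF.r
  | ann q M ih => exact NQ_scomp (NQ_nfq q) ih
  | insp ϑ ih => exact NQ_stb ih

theorem ext_er_step {M N : NTm} (h : TStepN M N) : extT M = extT N ∧ erT M = erT N := by
  induction h with
  | annRefl M => constructor <;> simp only [extT, erT, nfq, scomp]
  | annAnn q q' M =>
      constructor
      · simp only [extT, nfq]
        exact (scomp_assoc _ _ _ (NQ_nfq q) (NQ_nfq q') (NQ_extT M)).symm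
      · simp only [erT]
  | bangAnn q q' M =>
      constructor
      · simp only [extT]
      · simp only [erT, extT, nfq]
        rw [scomp_assoc _ _ _ (NQ_nfq q) (NQ_nfq q') (NQ_extT M)]
  | lamAnn q M =>
      constructor
      · simp only [extT, nfq]
        exact (scomp_slam_slam (NQ_nfq q) (NQ_extT M)).symm
      · simp only [erT]
  | apAnnL q M N =>
      constructor
      · simp only [extT, nfq]
        rw [scomp_sap_sap (NQ_nfq q) NF.r (NQ_extT M) (NQ_extT N)]
        simp only [scomp]
      · simp only [erT]
  | apAnnR q M N =>
      constructor
      · simp only [extT, nfq]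
        rw [scomp_sap_sap NF.r (NQ_nfq q) (NQ_extT M) (NQ_extT N)]
        simp only [scomp]
      · simp only [erT]
  | letsAnnL q M N =>
      constructor
      · simp only [extT, nfq]
        rw [scomp_slets_slets (NQ_nfq q) NF.r (NQ_extT M) (NQ_extT N)]
        simp only [scomp]
      · simp only [erT]
  | letsAnnR q M N =>
      constructor
      · simp only [extT, nfq]
        rw [scomp_slets_slets NF.r (NQ_nfq q) (NQ_extT M) (NQ_extT N)]
        simp only [scomp]
      · simp only [erT]
  | inspAnn ϑ i q M hi =>
      constructor
      · simp only [extT, nfq]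
        rw [scomp_stb_stb (fun j => NQ_nfq _) (fun j => NQ_extT _)]
        congr 1
        funext j
        by_cases hj : j = i
        · subst hj
          rw [Function.update_self, Function.update_self, hi]
          simp only [extT]
        · rw [Function.update_of_ne hj, Function.update_of_ne hj]
          simp only [nfq, scomp]
      · simp only [erT]
        congr 1
        funext j
        by_cases hj : j = i
        · subst hj
          rw [Function.update_self, hi]
          simp only [erT]
        · rw [Function.update_of_ne hj]
  | lamC h ih =>
      constructor
      · simp only [extT]; rw [ih.1]
      · simp only [erT]; rw [ih.2]
  | apL N h ih =>
      constructor
      · simp only [extT]; rw [ih.1]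
      · simp only [erT]; rw [ih.2]
  | apR M h ih =>
      constructor
      · simp only [extT]; rw [ih.1]
      · simp only [erT]; rw [ih.2]
  | letsL N h ih =>
      constructor
      · simp only [extT]; rw [ih.1]
      · simp only [erT]; rw [ih.2]
  | letsR M h ih =>
      constructor
      · simp only [extT]; rw [ih.1]
      · simp only [erT]; rw [ih.2]
  | bangQ M h =>
      constructor
      · simp only [extT]
      · simp only [erT]; rw [nfq_step h]
  | bangM q h ih =>
      constructor
      · simp only [extT]
      · simp only [erT]; rw [ih.1, ih.2]
  | annQ M h =>
      constructor
      · simp only [extT]; rw [nfq_step h]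
      · simp only [erT]
  | annM q h ih =>
      constructor
      · simp only [extT]; rw [ih.1]
      · simp only [erT]; rw [ih.2]
  | @inspC ϑ i M' h ih =>
      constructor
      · simp only [extT]
        congr 1
        funext j
        by_cases hj : j = i
        · subst hj; rw [Function.update_self, ih.1]
        · rw [Function.update_of_ne hj]
      · simp only [erT]
        congr 1
        funext j
        by_cases hj : j = i
        · subst hj; rw [Function.update_self, ih.2]
        · rw [Function.update_of_ne hj]

end CAU
namespace CAU

lemma normal_core : ∀ M : NTm, (∀ N, ¬ TStepN M N) → (∀ q E, M ≠ NTm.ann q E) →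
    extT M = .r ∧ erT M = M := by
  intro M
  induction M with
  | var n => intro _ _; exact ⟨rfl, rfl⟩
  | lam D ih =>
      intro h _
      have hD := ih (fun N st => h _ (TStepN.lamC st))
        (fun q E e => by subst e; exact h _ (TStepN.lamAnn q E))
      constructor
      · simp only [extT]; rw [hD.1, slam_r]
      · simp only [erT]; rw [hD.2]
  | ap A B ihA ihB =>
      intro h _
      have hA := ihA (fun N st => h _ (TStepN.apL _ st))
        (fun q E e => by subst e; exact h _ (TStepN.apAnnL q E B))
      have hB := ihB (fun N st => h _ (TStepN.apR _ st))
        (fun q E e => by subst e; exact h _ (TStepN.apAnnR q A E))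
      constructor
      · simp only [extT]; rw [hA.1, hB.1]; rfl
      · simp only [erT]; rw [hA.2, hB.2]
  | lets A B ihA ihB =>
      intro h _
      have hA := ihA (fun N st => h _ (TStepN.letsL _ st))
        (fun q E e => by subst e; exact h _ (TStepN.letsAnnL q E B))
      have hB := ihB (fun N st => h _ (TStepN.letsR _ st))
        (fun q E e => by subst e; exact h _ (TStepN.letsAnnR q A E))
      constructor
      · simp only [extT]; rw [hA.1, hB.1]; rfl
      · simp only [erT]; rw [hA.2, hB.2]
  | bang q D ih =>
      intro h _
      have hq : NQ q := NQ_of_normal q (fun q2 st => h _ (TStepN.bangQ D st))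
      have hD := ih (fun N st => h _ (TStepN.bangM q st))
        (fun q' E e => by subst e; exact h _ (TStepN.bangAnn q q' E))
      refine ⟨rfl, ?_⟩
      simp only [erT]
      rw [hD.1, nfq_of_NF hq, scomp_r_right hq, hD.2]
  | ann q D ih => intro _ hne; exact absurd rfl (hne q D)
  | insp ϑ ih =>
      intro h _
      have hcomp : ∀ i, extT (ϑ i) = .r ∧ erT (ϑ i) = ϑ i := fun i =>
        ih i (fun N st => h _ (TStepN.inspC i st)) (fun q E e => h _ (TStepN.inspAnn ϑ i q E e))
      constructor
      · exact if_pos (fun i => (hcomp i).1)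
      · show NTm.insp _ = _
        congr 1
        funext i
        exact (hcomp i).2

theorem nft_of_normal (M : NTm) (h : ∀ N, ¬ TStepN M N) : nft M = M := by
  cases M with
  | ann q D =>
      have hq : NQ q := NQ_of_normal q (fun q2 st => h _ (TStepN.annQ D st))
      have hqr : q ≠ .r := fun e => by subst e; exact h _ (TStepN.annRefl D)
      have hD := normal_core D (fun N st => h _ (TStepN.annM q st))
        (fun q' E e => by subst e; exact h _ (TStepN.annAnn q q' E))
      show sann (extT (.ann q D)) (erT (.ann q D)) = _
      simp only [extT, erT]
      rw [hD.1, hD.2, nfq_of_NF hq, scomp_r_right hq, sann, if_neg hqr]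
  | var n =>
      have hc := normal_core _ h (fun q E e => by simp at e)
      show sann _ _ = _
      rw [hc.1, hc.2]; exact if_pos rfl
  | lam D =>
      have hc := normal_core _ h (fun q E e => by simp at e)
      show sann _ _ = _
      rw [hc.1, hc.2]; exact if_pos rfl
  | ap A B =>
      have hc := normal_core _ h (fun q E e => by simp at e)
      show sann _ _ = _
      rw [hc.1, hc.2]; exact if_pos rfl
  | lets A B =>
      have hc := normal_core _ h (fun q E e => by simp at e)
      show sann _ _ = _
      rw [hc.1, hc.2]; exact if_pos rfl
  | bang q D =>
      have hc := normal_core _ h (fun q E e => by simp at e)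
      show sann _ _ = _
      rw [hc.1, hc.2]; exact if_pos rfl
  | insp ϑ =>
      have hc := normal_core _ h (fun q E e => by simp at e)
      show sann _ _ = _
      rw [hc.1, hc.2]; exact if_pos rfl

theorem nft_step {M N : NTm} (h : TStepN M N) : nft M = nft N := by
  rw [nft, nft, (ext_er_step h).1, (ext_er_step h).2]

theorem nft_reach (M : NTm) : Relation.ReflTransGen TStepN M (nft M) := by
  induction M using WellFounded.induction snN with
  | _ M ih =>
    by_cases hn : ∀ N, ¬ TStepN M N
    · rw [nft_of_normal M hn]
    · push_neg at hn
      obtain ⟨N, st⟩ := hn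
      rw [nft_step st]
      exact Relation.ReflTransGen.head st (ih N st)

theorem nft_star {M N : NTm} (h : Relation.ReflTransGen TStepN M N) : nft M = nft N := by
  induction h with
  | refl => rfl
  | @tail b c hab hbc ih => rw [ih, nft_step hbc]

theorem confluenceN (M N R : NTm) (h1 : Relation.ReflTransGen TStepN M N)
    (h2 : Relation.ReflTransGen TStepN M R) :
    ∃ S, Relation.ReflTransGen TStepN N S ∧ Relation.ReflTransGen TStepN R S := by
  refine ⟨nft M, ?_, ?_⟩
  · rw [nft_star h1]; exact nft_reach N
  · rw [nft_star h2]; exact nft_reach R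

end CAU

namespace CAU

/-- The permutation reduction τ on CAU⁻ terms and trails is terminating
(strongly normalizing) and confluent. -/
theorem tau_terminating_and_confluent :
    (WellFounded fun M N : NTm => TStepN N M) ∧
    (WellFounded fun q q' : NTr => TStepQ q' q) ∧
    (∀ M N R : NTm, Relation.ReflTransGen TStepN M N → Relation.ReflTransGen TStepN M R →
      ∃ S, Relation.ReflTransGen TStepN N S ∧ Relation.ReflTransGen TStepN R S) ∧
    (∀ q q₁ q₂ : NTr, Relation.ReflTransGen TStepQ q q₁ → Relation.ReflTransGen TStepQ q q₂ →
      ∃ q₃, Relation.ReflTransGen TStepQ q₁ q₃ ∧ Relation.ReflTransGen TStepQ q₂ q₃) :=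
  ⟨snN, snQ, confluenceN, confluenceQ⟩

end CAU
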